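/- arXiv:1807.11890 — 7 statements merged into one kernel-verified Lean document; each statement's English description precedes it below -/
import Mathlib

section
/- The graph K5 minus one edge is 2-Ramsey for cyclicity, and moreover it is minimal: for every edge e of K5 - e, the graph obtained by deleting e is not 2-Ramsey for cyclicity. -/
/-- A graph `G` is `r`-Ramsey for cyclicity: every `r`-edge-colouring admits a
monochromatic cycle. -/
def IsRamseyCyc {V : Type*} (r : ℕ) (G : SimpleGraph V) : Prop :=
  ∀ c : Sym2 V → Fin r, ∃ (v : V) (w : G.Walk v v), w.IsCycle ∧
    ∃ i : Fin r, ∀ e ∈ w.edges, c e = i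

/-- The complete graph on 5 vertices minus one edge. -/
def K5e : SimpleGraph (Fin 5) := (⊤ : SimpleGraph (Fin 5)).deleteEdges {s(0, 1)}

namespace RamseyAux

open SimpleGraph

instance singletonSetDec' {V : Type*} [DecidableEq V] (e : Sym2 V) :
    DecidablePred (· ∈ ({e} : Set (Sym2 V))) := fun x =>
  decidable_of_iff' (x = e) Set.mem_singleton_iff

instance deleteEdgesDec' {V : Type*} (G : SimpleGraph V) [DecidableRel G.Adj]
    (s : Set (Sym2 V)) [DecidablePred (· ∈ s)] : DecidableRel (G.deleteEdges s).Adj :=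
  fun _ _ => decidable_of_iff' _ SimpleGraph.deleteEdges_adj

instance K5eAdjDec : DecidableRel K5e.Adj :=
  inferInstanceAs (DecidableRel ((⊤ : SimpleGraph (Fin 5)).deleteEdges {s(0, 1)}).Adj)

instance sdiffAdjDec {V : Type*} (G H : SimpleGraph V) [DecidableRel G.Adj]
    [DecidableRel H.Adj] : DecidableRel (G \ H).Adj := fun v w =>
  decidable_of_iff' _ (G.sdiff_adj H v w)

instance fromEdgeSetDec {V : Type*} [DecidableEq V] (s : Set (Sym2 V))
    [DecidablePred (· ∈ s)] : DecidableRel (SimpleGraph.fromEdgeSet s).Adj := fun _ _ =>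
  decidable_of_iff' _ (SimpleGraph.fromEdgeSet_adj s)

/-- Decidable version of acyclicity. -/
def acyc {V : Type*} [Fintype V] [DecidableEq V] (G : SimpleGraph V)
    [DecidableRel G.Adj] : Prop :=
  ∀ ⦃v w : V⦄, G.Adj v w →
    (G.Adj v w ∧ ¬(G \ SimpleGraph.fromEdgeSet {s(v, w)}).Reachable v w)

instance acycDec {V : Type*} [Fintype V] [DecidableEq V] (G : SimpleGraph V)
    [DecidableRel G.Adj] : Decidable (acyc G) := by unfold acyc; infer_instance

lemma acyc_iff {V : Type*} [Fintype V] [DecidableEq V] (G : SimpleGraph V)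
    [DecidableRel G.Adj] : G.IsAcyclic ↔ acyc G := by
  rw [isAcyclic_iff_forall_adj_isBridge]
  unfold acyc
  simp only [isBridge_iff]
  constructor <;> intro h v w hvw
  · exact ⟨hvw, h hvw⟩
  · exact (h hvw).2

lemma exists_cycle_of_not_acyclic {V : Type*} {G : SimpleGraph V} (h : ¬ G.IsAcyclic) :
    ∃ (v : V) (w : G.Walk v v), w.IsCycle := by
  by_contra h'
  push_neg at h'
  exact h fun v w hw => h' v w hw

/-- Transfer a cycle from a monochromatic subgraph to the big graph. -/
lemma mono_cycle {V : Type*} {G H : SimpleGraph V} {c : Sym2 V → Fin 2} {i : Fin 2}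
    (hle : ∀ e ∈ H.edgeSet, e ∈ G.edgeSet ∧ c e = i) {v : V} {w : H.Walk v v}
    (hw : w.IsCycle) :
    ∃ (v : V) (w : G.Walk v v), w.IsCycle ∧ ∃ j : Fin 2, ∀ e ∈ w.edges, c e = j := by
  refine ⟨v, w.transfer G (fun e he => (hle e (w.edges_subset_edgeSet he)).1),
    hw.transfer _, i, ?_⟩
  intro e he
  rw [SimpleGraph.Walk.edges_transfer] at he
  exact (hle e (w.edges_subset_edgeSet he)).2

/-! ### Part 1 -/

/-- The nine edges of `K5e`. -/
def eL : Fin 9 → Sym2 (Fin 5) :=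
  ![s(0,2), s(0,3), s(0,4), s(1,2), s(1,3), s(1,4), s(2,3), s(2,4), s(3,4)]

lemma eL_mem : ∀ j, eL j ∈ K5e.edgeSet := by decide

/-- Subgraph of `K5e` spanned by a subset of the nine edges. -/
def Gf (f : Fin 9 → Bool) : SimpleGraph (Fin 5) where
  Adj v w := v ≠ w ∧ ∃ j, f j = true ∧ eL j = s(v, w)
  symm := ⟨by rintro v w ⟨h, j, hj, hjj⟩; exact ⟨h.symm, j, hj, by rwa [Sym2.eq_swap]⟩⟩
  loopless := ⟨fun v h => h.1 rfl⟩

instance GfDec (f : Fin 9 → Bool) : DecidableRel (Gf f).Adj := fun v w => by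
  unfold Gf; infer_instance

set_option maxRecDepth 100000 in
set_option maxHeartbeats 4000000 in
lemma key : ∀ f : Fin 9 → Bool,
    (Finset.univ.filter (fun j => f j = true)).card = 5 → ¬ acyc (Gf f) := by decide

lemma part1_aux (c : Sym2 (Fin 5) → Fin 2) (i : Fin 2) (F : Fin 9 → Bool)
    (hF : ∀ j, F j = true → c (eL j) = i)
    (h5 : 5 ≤ (Finset.univ.filter (fun j => F j = true)).card) :
    ∃ (v : Fin 5) (w : K5e.Walk v v), w.IsCycle ∧ ∃ j : Fin 2, ∀ e ∈ w.edges, c e = j := by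
  obtain ⟨t, ht, hcard⟩ := Finset.exists_subset_card_eq h5
  set g : Fin 9 → Bool := fun j => decide (j ∈ t) with hg
  have hfive : (Finset.univ.filter (fun j => g j = true)).card = 5 := by
    rw [← hcard]
    congr 1
    ext j
    simp [hg]
  have hnot := key g hfive
  rw [← acyc_iff] at hnot
  obtain ⟨v, w, hw⟩ := exists_cycle_of_not_acyclic hnot
  have hle : ∀ e ∈ (Gf g).edgeSet, e ∈ K5e.edgeSet ∧ c e = i := by
    intro e
    induction e using Sym2.ind with
    | _ a b =>
      intro he
      rw [SimpleGraph.mem_edgeSet] at he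
      obtain ⟨-, j, hj, hjj⟩ := he
      have hjt : j ∈ t := by simpa [hg] using hj
      have hcol : c (eL j) = i := hF j (Finset.mem_filter.mp (ht hjt)).2
      rw [← hjj]
      exact ⟨eL_mem j, hcol⟩
  exact mono_cycle hle hw

lemma fin2_eq_one {x : Fin 2} (h : x ≠ 0) : x = 1 := by omega

lemma part1 : IsRamseyCyc 2 K5e := by
  intro c
  set f : Fin 9 → Bool := fun j => decide (c (eL j) = 0) with hf
  have hsum := Finset.card_filter_add_card_filter_not
    (s := (Finset.univ : Finset (Fin 9))) (p := fun j => f j = true)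
  rw [Finset.card_univ, Fintype.card_fin] at hsum
  by_cases h5 : 5 ≤ (Finset.univ.filter (fun j => f j = true)).card
  · exact part1_aux c 0 f (fun j hj => by simpa [hf] using hj) h5
  · refine part1_aux c 1 (fun j => !f j) ?_ ?_
    · intro j hj
      apply fin2_eq_one
      simp only [hf, Bool.not_eq_true', decide_eq_false_iff_not] at hj
      exact hj
    · show 5 ≤ (Finset.univ.filter (fun j => (!f j) = true)).card
      have : (Finset.univ.filter (fun j => (!f j) = true)).card
          = (Finset.univ.filter (fun j => ¬ (f j = true))).card := by
        congr 1
        ext j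
        simp
      omega

/-! ### Part 2 -/

/-- The subgraph of `G` consisting of the edges of colour `i`. -/
def colorSub {V : Type*} (G : SimpleGraph V) (c : Sym2 V → Fin 2) (i : Fin 2) :
    SimpleGraph V where
  Adj v w := G.Adj v w ∧ c s(v, w) = i
  symm := ⟨fun v w h => ⟨h.1.symm, by rw [Sym2.eq_swap]; exact h.2⟩⟩
  loopless := ⟨fun v h => G.loopless.irrefl v h.1⟩

instance colorSubDec {V : Type*} [DecidableEq V] (G : SimpleGraph V) [DecidableRel G.Adj]
    (c : Sym2 V → Fin 2) (i : Fin 2) : DecidableRel (colorSub G c i).Adj := fun v w => by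
  unfold colorSub; exact instDecidableAnd

lemma colorSub_edgeSet {V : Type*} (G : SimpleGraph V) (c : Sym2 V → Fin 2) (i : Fin 2)
    (e : Sym2 V) : e ∈ (colorSub G c i).edgeSet ↔ e ∈ G.edgeSet ∧ c e = i := by
  induction e using Sym2.ind with
  | _ a b => simp only [SimpleGraph.mem_edgeSet]; rfl

lemma part2_aux (e : Sym2 (Fin 5)) (S : Finset (Sym2 (Fin 5)))
    (h0 : acyc (colorSub (K5e.deleteEdges {e})
      (fun x => if x ∈ S then (0 : Fin 2) else 1) 0))
    (h1 : acyc (colorSub (K5e.deleteEdges {e})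
      (fun x => if x ∈ S then (0 : Fin 2) else 1) 1)) :
    ¬ IsRamseyCyc 2 (K5e.deleteEdges {e}) := by
  intro h
  obtain ⟨v, w, hw, i, hmono⟩ := h (fun x => if x ∈ S then (0 : Fin 2) else 1)
  set c : Sym2 (Fin 5) → Fin 2 := fun x => if x ∈ S then (0 : Fin 2) else 1 with hc
  have hE : ∀ e' ∈ w.edges, e' ∈ (colorSub (K5e.deleteEdges {e}) c i).edgeSet := by
    intro e' he'
    rw [colorSub_edgeSet]
    exact ⟨w.edges_subset_edgeSet he', hmono e' he'⟩
  have hcyc := hw.transfer hE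
  have hacyc : (colorSub (K5e.deleteEdges {e}) c i).IsAcyclic := by
    fin_cases i
    · exact (acyc_iff _).mpr h0
    · exact (acyc_iff _).mpr h1
  exact hacyc _ hcyc

end RamseyAux

open RamseyAux in
set_option maxRecDepth 100000 in
set_option maxHeartbeats 4000000 in
/-- `K5 - e` is 2-Ramsey for cyclicity, and minimally so: deleting any
edge destroys the property. -/
theorem stmt2 :
    IsRamseyCyc 2 K5e ∧ ∀ e ∈ K5e.edgeSet, ¬ IsRamseyCyc 2 (K5e.deleteEdges {e}) := by
  refine ⟨part1, ?_⟩
  intro e he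
  have h : e = s(0,2) ∨ e = s(0,3) ∨ e = s(0,4) ∨ e = s(1,2) ∨ e = s(1,3) ∨ e = s(1,4)
      ∨ e = s(2,3) ∨ e = s(2,4) ∨ e = s(3,4) := by
    revert he
    revert e
    decide
  rcases h with rfl | rfl | rfl | rfl | rfl | rfl | rfl | rfl | rfl
  · exact part2_aux _ {s(0,3), s(1,2), s(1,3), s(2,4)} (by decide) (by decide)
  · exact part2_aux _ {s(0,2), s(1,2), s(1,3), s(2,4)} (by decide) (by decide)
  · exact part2_aux _ {s(0,2), s(1,2), s(1,3), s(2,4)} (by decide) (by decide)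
  · exact part2_aux _ {s(0,2), s(0,3), s(1,3), s(2,4)} (by decide) (by decide)
  · exact part2_aux _ {s(0,2), s(0,3), s(1,2), s(2,4)} (by decide) (by decide)
  · exact part2_aux _ {s(0,2), s(0,3), s(1,2), s(2,4)} (by decide) (by decide)
  · exact part2_aux _ {s(0,2), s(0,3), s(1,2), s(1,4)} (by decide) (by decide)
  · exact part2_aux _ {s(0,2), s(0,3), s(1,2), s(1,4)} (by decide) (by decide)
  · exact part2_aux _ {s(0,2), s(0,3), s(1,2), s(1,4)} (by decide) (by decide)
end

section
/- Every minimal r-Ramsey graph for cyclicity (r ≥ 2) has minimum degree at least r + 1 and at most 2r - 1. -/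
/-- `G` is a minimal `r`-Ramsey graph for cyclicity. -/
def IsMinRamseyCyc {V : Type*} (r : ℕ) (G : SimpleGraph V) : Prop :=
  IsRamseyCyc r G ∧ ∀ H : G.Subgraph, H ≠ ⊤ → ¬ IsRamseyCyc r H.coe

open SimpleGraph

namespace RamseyCycAux

variable {V : Type*}

/-- Transfer a walk in `G` whose edges all lie in a subgraph `H` to a walk in `H.coe`. -/
def walkIn {G : SimpleGraph V} (H : G.Subgraph) :
    ∀ {u w : V} (p : G.Walk u w) (hu : u ∈ H.verts) (hw : w ∈ H.verts)
      (_he : ∀ e ∈ p.edges, e ∈ H.edgeSet), H.coe.Walk ⟨u, hu⟩ ⟨w, hw⟩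
  | _, _, SimpleGraph.Walk.nil, _, _, _ => SimpleGraph.Walk.nil
  | u, w, SimpleGraph.Walk.cons (v := b) _ p, hu, hw, he =>
      have hH : H.Adj u b := (H.mem_edgeSet).1 (he _ (by simp))
      SimpleGraph.Walk.cons hH.coe
        (walkIn H p _ hw fun e hep => he e (by simp [hep]))

lemma walkIn_map {G : SimpleGraph V} (H : G.Subgraph) :
    ∀ {u w : V} (p : G.Walk u w) (hu : u ∈ H.verts) (hw : w ∈ H.verts)
      (he : ∀ e ∈ p.edges, e ∈ H.edgeSet), (walkIn H p hu hw he).map H.hom = p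
  | _, _, SimpleGraph.Walk.nil, _, _, _ => rfl
  | u, w, SimpleGraph.Walk.cons (v := b) h p, hu, hw, he => by
      simp only [walkIn, SimpleGraph.Walk.map_cons]
      exact congrArg (SimpleGraph.Walk.cons h) (walkIn_map H p _ hw _)

lemma cycle_in_coe {G : SimpleGraph V} (H : G.Subgraph) {u : V} (w : G.Walk u u)
    (hc : w.IsCycle) (hu : u ∈ H.verts) (he : ∀ e ∈ w.edges, e ∈ H.edgeSet) :
    ∃ w' : H.coe.Walk ⟨u, hu⟩ ⟨u, hu⟩, w'.IsCycle ∧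
      w'.edges.map (Sym2.map H.hom) = w.edges := by
  refine ⟨walkIn H w hu hu he, ?_, ?_⟩
  · have hinj : Function.Injective (H.hom : ↥H.verts → V) := fun a b hab => Subtype.ext hab
    rw [← walkIn_map H w hu hu he] at hc
    exact (SimpleGraph.Walk.map_isCycle_iff_of_injective hinj).1 hc
  · rw [← SimpleGraph.Walk.edges_map, walkIn_map]; rfl

lemma exists_cycle_of_two_le_degree [Fintype V] [Nonempty V] (G : SimpleGraph V)
    [DecidableRel G.Adj] (h2 : ∀ v : V, 2 ≤ G.degree v) :
    ∃ (v : V) (w : G.Walk v v), w.IsCycle := by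
  classical
  set P : ℕ → Prop := fun n => ∃ (a b : V) (p : G.Walk a b), p.IsPath ∧ p.length = n with hP
  have hP0 : P 0 := ⟨Classical.arbitrary V, _, SimpleGraph.Walk.nil, SimpleGraph.Walk.IsPath.nil, rfl⟩
  set N := Nat.findGreatest P (Fintype.card V) with hN
  have hPN : P N := Nat.findGreatest_spec (Nat.zero_le _) hP0
  have hmax : ∀ {a b : V} (q : G.Walk a b), q.IsPath → q.length ≤ N := by
    intro a b q hq
    by_contra hlen
    push_neg at hlen
    exact Nat.findGreatest_is_greatest hlen (le_of_lt hq.length_lt) ⟨a, b, q, hq, rfl⟩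
  obtain ⟨u, t, p, hp, hlen⟩ := hPN
  cases p with
  | nil =>
    obtain ⟨y, hy⟩ := (G.degree_pos_iff_exists_adj u).1 (by have := h2 u; omega)
    have hpath : (SimpleGraph.Walk.cons hy.symm SimpleGraph.Walk.nil).IsPath := by
      simp [SimpleGraph.Walk.cons_isPath_iff, hy.ne']
    have := hmax _ hpath
    simp only [SimpleGraph.Walk.length_cons, SimpleGraph.Walk.length_nil] at this hlen
    omega
  | cons ha q =>
    rename_i x
    rw [SimpleGraph.Walk.cons_isPath_iff] at hp
    obtain ⟨hqp, hus⟩ := hp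
    have hcard : 1 < (G.neighborFinset u).card := by
      have := h2 u; rwa [← G.card_neighborFinset_eq_degree] at this
    obtain ⟨y, hy, hyx⟩ := Finset.exists_mem_ne hcard x
    rw [SimpleGraph.mem_neighborFinset] at hy
    by_cases hys : y ∈ (SimpleGraph.Walk.cons ha q).support
    · -- build a cycle
      have hyu : y ≠ u := hy.ne'
      refine ⟨y, SimpleGraph.Walk.cons hy.symm ((SimpleGraph.Walk.cons ha q).takeUntil y hys), ?_⟩
      rw [SimpleGraph.Walk.cons_isCycle_iff]
      refine ⟨(SimpleGraph.Walk.cons_isPath_iff _ _ |>.2 ⟨hqp, hus⟩).takeUntil hys, ?_⟩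
      intro hmem
      have hmem' := SimpleGraph.Walk.edges_takeUntil_subset _ hys hmem
      rw [SimpleGraph.Walk.edges_cons] at hmem'
      rcases List.mem_cons.1 hmem' with hh | hh
      · rw [Sym2.eq_iff] at hh
        rcases hh with ⟨h1, h2⟩ | ⟨h1, h2⟩
        · exact hyu h1
        · exact hyx h1
      · exact hus (q.snd_mem_support_of_mem_edges hh)
    · -- extend the path, contradiction
      have hpath : (SimpleGraph.Walk.cons hy.symm (SimpleGraph.Walk.cons ha q)).IsPath := by
        rw [SimpleGraph.Walk.cons_isPath_iff]
        exact ⟨SimpleGraph.Walk.cons_isPath_iff _ _ |>.2 ⟨hqp, hus⟩, hys⟩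
      have := hmax _ hpath
      simp only [SimpleGraph.Walk.length_cons] at this hlen
      omega

lemma exists_cycle_aux : ∀ (n : ℕ) {V : Type*} [Fintype V] (G : SimpleGraph V)
    [DecidableRel G.Adj], Fintype.card V ≤ n → 0 < Fintype.card V →
    Fintype.card V ≤ G.edgeFinset.card → ∃ (v : V) (w : G.Walk v v), w.IsCycle := by
  intro n
  induction n with
  | zero => intro V _ G _ h1 h2 _; omega
  | succ n ih =>
    intro V _ G _ hc hpos hE
    classical
    by_cases h2 : ∀ v : V, 2 ≤ G.degree v
    · have : Nonempty V := Fintype.card_pos_iff.1 hpos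
      exact exists_cycle_of_two_le_degree G h2
    · push_neg at h2
      obtain ⟨v, hv⟩ := h2
      have hdeg : G.degree v ≤ 1 := by omega
      -- card V ≥ 2
      have hV2 : 2 ≤ Fintype.card V := by
        rcases Nat.lt_or_ge (Fintype.card V) 2 with h | h
        · exfalso
          have h1 : Fintype.card V = 1 := by omega
          have := G.card_edgeFinset_le_card_choose_two
          rw [h1] at this
          have h0 : G.edgeFinset.card ≤ 0 := by simpa using this
          omega
        · exact h
      set s : Set V := {x | x ≠ v} with hs
      haveI : DecidablePred (· ∈ s) := Classical.decPred _
      set G' : SimpleGraph ↥s := G.induce s with hG'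
      haveI : DecidableRel G'.Adj := Classical.decRel _
      have hcards : Fintype.card ↥s = Fintype.card V - 1 := by
        have h1 : Fintype.card ↥s = Fintype.card {x : V // x ≠ v} :=
          Fintype.card_congr (Equiv.refl _)
        have h2 : Fintype.card {x : V // ¬ x = v} = Fintype.card V - 1 := by
          rw [Fintype.card_subtype_compl (p := fun x : V => x = v), Fintype.card_subtype_eq]
        rw [h1]
        exact h2
      -- edge comparison
      have hsub : G.edgeFinset ⊆
          (G'.edgeFinset.image (Sym2.map ((↑) : ↥s → V))) ∪ G.incidenceFinset v := by
        intro e he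
        induction e with
        | _ a b =>
          rw [SimpleGraph.mem_edgeFinset, SimpleGraph.mem_edgeSet] at he
          by_cases hmem : v = a ∨ v = b
          · refine Finset.mem_union_right _ ?_
            rw [SimpleGraph.mem_incidenceFinset]
            exact ⟨he, by rw [Sym2.mem_iff]; exact hmem⟩
          · push_neg at hmem
            refine Finset.mem_union_left _ ?_
            refine Finset.mem_image.2 ⟨s(⟨a, Ne.symm hmem.1⟩, ⟨b, Ne.symm hmem.2⟩), ?_, ?_⟩
            · rw [SimpleGraph.mem_edgeFinset, SimpleGraph.mem_edgeSet]
              exact he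
            · rfl
      have hcount : G.edgeFinset.card ≤ G'.edgeFinset.card + 1 := by
        calc G.edgeFinset.card
            ≤ ((G'.edgeFinset.image (Sym2.map ((↑) : ↥s → V))) ∪ G.incidenceFinset v).card :=
              Finset.card_le_card hsub
          _ ≤ (G'.edgeFinset.image (Sym2.map ((↑) : ↥s → V))).card +
              (G.incidenceFinset v).card := Finset.card_union_le _ _
          _ ≤ G'.edgeFinset.card + (G.incidenceFinset v).card :=
              Nat.add_le_add_right (Finset.card_image_le) _
          _ ≤ G'.edgeFinset.card + 1 := by
              rw [SimpleGraph.card_incidenceFinset_eq_degree]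
              omega
      obtain ⟨u', w', hw'⟩ := ih G' (by omega) (by omega) (by omega)
      -- map back into G
      let f : G' →g G := ⟨Subtype.val, fun {a b} hab => by exact hab⟩
      exact ⟨u', w'.map f, hw'.map (f := f) (fun a b hab => Subtype.ext hab)⟩

theorem part1 {V : Type*} [Fintype V] (r : ℕ) (hr : 2 ≤ r) (G : SimpleGraph V)
    [DecidableRel G.Adj] (h : IsMinRamseyCyc r G) : ∀ v : V, r + 1 ≤ G.degree v := by
  classical
  obtain ⟨hRam, hMin⟩ := h
  intro v
  by_contra hlt
  push_neg at hlt
  have hdeg : G.degree v ≤ r := by omega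
  set H := (⊤ : G.Subgraph).deleteVerts {v} with hH
  have hHne : H ≠ ⊤ := by
    intro hEq
    have hmem : v ∈ H.verts := by rw [hEq]; trivial
    rw [hH, SimpleGraph.Subgraph.deleteVerts_verts] at hmem
    simp at hmem
  have hnot := hMin H hHne
  rw [IsRamseyCyc] at hnot
  push_neg at hnot
  obtain ⟨c₀, hc₀⟩ := hnot
  -- injection from neighbors to colors
  have hcard : Fintype.card {x // x ∈ G.neighborFinset v} ≤ Fintype.card (Fin r) := by
    rw [Fintype.card_coe, Fintype.card_fin]
    rwa [SimpleGraph.card_neighborFinset_eq_degree]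
  obtain ⟨g⟩ := Function.Embedding.nonempty_of_card_le hcard
  have hr0 : 0 < r := by omega
  set f : V → Fin r := fun x =>
    if hx : x ∈ G.neighborFinset v then g ⟨x, hx⟩ else ⟨0, hr0⟩ with hf
  have hvmem : ∀ {x : V}, x ≠ v → x ∈ H.verts := by
    intro x hx
    rw [hH, SimpleGraph.Subgraph.deleteVerts_verts]
    simp [hx]
  set g2 : V → V → Fin r := fun a b =>
    if ha : a = v then f b else if hb : b = v then f a
    else c₀ s(⟨a, hvmem ha⟩, ⟨b, hvmem hb⟩) with hg2
  have hsymm : ∀ a b, g2 a b = g2 b a := by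
    intro a b
    by_cases ha : a = v <;> by_cases hb : b = v <;> simp [hg2, ha, hb]
    rw [Sym2.eq_swap]
  set c : Sym2 V → Fin r := Sym2.lift ⟨g2, hsymm⟩ with hc
  obtain ⟨u, w, hw, i, hmono⟩ := hRam c
  by_cases hv : v ∈ w.support
  · -- cycle through v : two distinctly-coloured edges at v
    set w' := w.rotate v hv with hw'def
    have hw' : w'.IsCycle := hw.rotate hv
    have hmono' : ∀ e ∈ w'.edges, c e = i := by
      intro e hee
      exact hmono e (((w.rotate_edges v hv).mem_iff).1 hee)
    clear_value w'
    cases w' with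
    | nil => exact absurd rfl hw'.ne_nil
    | cons ha p =>
      rename_i b
      obtain ⟨hpath, hne⟩ := (SimpleGraph.Walk.cons_isCycle_iff p ha).1 hw'
      have hvb : v ≠ b := ha.ne
      obtain ⟨d, hd, q, hq⟩ := SimpleGraph.Walk.exists_eq_cons_of_ne hvb p.reverse
      have hdmem : s(v, d) ∈ p.edges := by
        have : s(v, d) ∈ p.reverse.edges := by rw [hq]; simp
        rwa [SimpleGraph.Walk.edges_reverse, List.mem_reverse] at this
      have hcb : c s(v, b) = i := hmono' _ (by simp)
      have hcd : c s(v, d) = i := hmono' _ (by rw [SimpleGraph.Walk.edges_cons]; right; exact hdmem)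
      have hfb : c s(v, b) = f b := by
        simp only [hc, Sym2.lift_mk, hg2]; simp
      have hfd : c s(v, d) = f d := by
        simp only [hc, Sym2.lift_mk, hg2]; simp
      have hbmem : b ∈ G.neighborFinset v := (SimpleGraph.mem_neighborFinset _ _ _).2 ha
      have hdmem' : d ∈ G.neighborFinset v := (SimpleGraph.mem_neighborFinset _ _ _).2 hd
      have hfbg : f b = g ⟨b, hbmem⟩ := by rw [hf]; simp [hbmem]
      have hfdg : f d = g ⟨d, hdmem'⟩ := by rw [hf]; simp [hdmem']
      have : g ⟨b, hbmem⟩ = g ⟨d, hdmem'⟩ := by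
        rw [← hfbg, ← hfdg, ← hfb, ← hfd, hcb, hcd]
      have hbd : b = d := congrArg Subtype.val (g.injective this)
      subst hbd
      exact hne hdmem
  · -- cycle avoiding v : transfer to H.coe
    have huv : u ≠ v := fun h' => hv (h' ▸ w.start_mem_support)
    have hu : u ∈ H.verts := hvmem huv
    have he : ∀ e ∈ w.edges, e ∈ H.edgeSet := by
      intro e hee
      induction e with
      | _ a b =>
        have hadj : G.Adj a b := w.adj_of_mem_edges hee
        have hav : a ≠ v := fun h' => hv (h' ▸ w.fst_mem_support_of_mem_edges hee)
        have hbv : b ≠ v := fun h' => hv (h' ▸ w.snd_mem_support_of_mem_edges hee)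
        rw [SimpleGraph.Subgraph.mem_edgeSet, hH]
        rw [SimpleGraph.Subgraph.deleteVerts_adj]
        simp [hav, hbv, hadj]
    obtain ⟨w'', hw'', hedges⟩ := cycle_in_coe H w hw hu he
    obtain ⟨e', he', hne'⟩ := hc₀ ⟨u, hu⟩ w'' hw'' i
    have hmem : Sym2.map H.hom e' ∈ w.edges := by
      rw [← hedges]; exact List.mem_map_of_mem he'
    have hceq := hmono _ hmem
    apply hne'
    clear he'
    revert hceq
    induction e' with
    | _ a b =>
      intro hceq
      rw [← hceq]
      have hav : (a : V) ≠ v := by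
        have h' : (a : V) ∈ ((Set.univ : Set V) \ {v}) := a.2
        simpa using h'.2
      have hbv : (b : V) ≠ v := by
        have h' : (b : V) ∈ ((Set.univ : Set V) \ {v}) := b.2
        simpa using h'.2
      show c₀ s(a, b) = c (s(a, b).map H.hom)
      rw [Sym2.map_pair_eq]
      simp only [hc, Sym2.lift_mk, hg2]
      rw [dif_neg (show ¬ H.hom a = v from hav), dif_neg (show ¬ H.hom b = v from hbv)]
      rfl

theorem part2 {V : Type*} [Fintype V] (r : ℕ) (hr : 2 ≤ r) (G : SimpleGraph V)
    [DecidableRel G.Adj] (h : IsMinRamseyCyc r G) : ∃ v : V, G.degree v ≤ 2 * r - 1 := by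
  classical
  obtain ⟨hRam, hMin⟩ := h
  by_contra hbig
  push_neg at hbig
  have hdeg : ∀ x : V, 2 * r ≤ G.degree x := by intro x; have := hbig x; omega
  -- get a vertex and an edge
  have hr0 : 0 < r := by omega
  obtain ⟨v, -⟩ := hRam (fun _ => ⟨0, hr0⟩)
  obtain ⟨u, hvu⟩ := (G.degree_pos_iff_exists_adj v).1 (by have := hdeg v; omega)
  set H := (⊤ : G.Subgraph).deleteEdges {s(v, u)} with hH
  have hHadj : ¬ H.Adj v u := by
    rw [hH, SimpleGraph.Subgraph.deleteEdges_adj]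
    simp
  have hHne : H ≠ ⊤ := by
    intro hEq
    rw [hEq] at hHadj
    exact hHadj ((SimpleGraph.Subgraph.top_adj).2 hvu)
  have hnot := hMin H hHne
  rw [IsRamseyCyc] at hnot
  push_neg at hnot
  obtain ⟨c₀, hc₀⟩ := hnot
  -- colour classes
  set K : Fin r → SimpleGraph ↥H.verts := fun i =>
    { Adj := fun a b => H.coe.Adj a b ∧ c₀ s(a, b) = i
      symm := by
        refine ⟨fun a b hab => ?_⟩
        exact ⟨hab.1.symm, by rw [Sym2.eq_swap]; exact hab.2⟩
      loopless := ⟨fun a hab => H.coe.loopless.irrefl a hab.1⟩ } with hK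
  have hKle : ∀ i, K i ≤ H.coe := fun i a b hab => hab.1
  -- cardinalities
  have hcardV : Fintype.card ↥H.verts = Fintype.card V := by
    have : H.verts = (Set.univ : Set V) := rfl
    exact Fintype.card_congr (Equiv.Set.univ V)
  have hVpos : 0 < Fintype.card V := Fintype.card_pos_iff.2 ⟨v⟩
  -- edge counting
  have hEdges : r * Fintype.card V ≤ G.edgeFinset.card := by
    have hsum := G.sum_degrees_eq_twice_card_edges
    have hlow : Fintype.card V * (2 * r) ≤ ∑ x : V, G.degree x := by
      calc Fintype.card V * (2 * r) = ∑ _x : V, 2 * r := by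
            rw [Finset.sum_const, Finset.card_univ, smul_eq_mul]
        _ ≤ ∑ x : V, G.degree x := Finset.sum_le_sum (fun x _ => hdeg x)
    nlinarith
  have hmemE : s(v, u) ∈ G.edgeFinset := by
    rw [SimpleGraph.mem_edgeFinset, SimpleGraph.mem_edgeSet]; exact hvu
  -- if all colour classes are small we get a contradiction
  have hexistsbig : ∃ i : Fin r, Fintype.card V ≤ (K i).edgeFinset.card := by
    by_contra hsmall
    push_neg at hsmall
    have hsub : G.edgeFinset.erase s(v, u) ⊆
        Finset.univ.biUnion (fun i : Fin r =>
          (K i).edgeFinset.image (Sym2.map (Subtype.val : ↥H.verts → V))) := by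
      intro e he
      rw [Finset.mem_erase] at he
      obtain ⟨hne, heE⟩ := he
      induction e with
      | _ a b =>
        rw [SimpleGraph.mem_edgeFinset, SimpleGraph.mem_edgeSet] at heE
        have ha : a ∈ H.verts := trivial
        have hb : b ∈ H.verts := trivial
        have hHab : H.Adj a b := by
          rw [hH, SimpleGraph.Subgraph.deleteEdges_adj]
          refine ⟨(SimpleGraph.Subgraph.top_adj).2 heE, by simpa using hne⟩
        set i := c₀ s(⟨a, ha⟩, ⟨b, hb⟩) with hi
        refine Finset.mem_biUnion.2 ⟨i, Finset.mem_univ _, Finset.mem_image.2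
          ⟨s(⟨a, ha⟩, ⟨b, hb⟩), ?_, ?_⟩⟩
        · rw [SimpleGraph.mem_edgeFinset, SimpleGraph.mem_edgeSet]
          exact ⟨hHab.coe, rfl⟩
        · rfl
    have hcount : G.edgeFinset.card - 1 ≤ r * (Fintype.card V - 1) := by
      have h1 : (G.edgeFinset.erase s(v, u)).card = G.edgeFinset.card - 1 :=
        Finset.card_erase_of_mem hmemE
      have h2 : (G.edgeFinset.erase s(v, u)).card ≤
          ∑ i : Fin r, ((K i).edgeFinset.image (Sym2.map (Subtype.val : ↥H.verts → V))).card :=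
        le_trans (Finset.card_le_card hsub) (Finset.card_biUnion_le)
      have h3 : ∀ i : Fin r,
          ((K i).edgeFinset.image (Sym2.map (Subtype.val : ↥H.verts → V))).card ≤
          Fintype.card V - 1 := by
        intro i
        calc _ ≤ (K i).edgeFinset.card := Finset.card_image_le
          _ ≤ Fintype.card V - 1 := by have := hsmall i; omega
      calc G.edgeFinset.card - 1 = (G.edgeFinset.erase s(v, u)).card := h1.symm
        _ ≤ ∑ i : Fin r, ((K i).edgeFinset.image (Sym2.map (Subtype.val : ↥H.verts → V))).card := h2
        _ ≤ ∑ _i : Fin r, (Fintype.card V - 1) := Finset.sum_le_sum (fun i _ => h3 i)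
        _ = r * (Fintype.card V - 1) := by
            rw [Finset.sum_const, Finset.card_univ, Fintype.card_fin, smul_eq_mul]
    have hmul : r * Fintype.card V = r * (Fintype.card V - 1) + r := by
      rcases Nat.exists_eq_succ_of_ne_zero (Nat.pos_iff_ne_zero.1 hVpos) with ⟨m, hm⟩
      rw [hm]
      simp [Nat.mul_succ]
    omega
  obtain ⟨i, hKbig⟩ := hexistsbig
  obtain ⟨a₁, w₁, hw₁⟩ := exists_cycle_aux (Fintype.card ↥H.verts) (K i) le_rfl
    (by omega) (by omega)
  -- map into H.coe and contradict hc₀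
  have hw₂ : (w₁.mapLe (hKle i)).IsCycle := hw₁.mapLe _
  obtain ⟨e, he, hne⟩ := hc₀ a₁ (w₁.mapLe (hKle i)) hw₂ i
  apply hne
  have he' : e ∈ w₁.edges := by
    have : (w₁.mapLe (hKle i)).edges = w₁.edges := by
      rw [SimpleGraph.Walk.edges_map]
      have hsf : Sym2.map ⇑(SimpleGraph.Hom.ofLE (hKle i)) = id := by
        funext e
        induction e with
        | _ a b => rfl
      rw [hsf, List.map_id]
    rwa [this] at he
  have heK : e ∈ (K i).edgeSet := w₁.edges_subset_edgeSet he'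
  induction e with
  | _ a b => exact heK.2

end RamseyCycAux

/-- every minimal `r`-Ramsey graph for cyclicity (`r ≥ 2`) has minimum
degree at least `r + 1` and at most `2r - 1`: every vertex has degree `≥ r + 1` and
some vertex has degree `≤ 2r - 1`. -/
theorem stmt5 {V : Type*} [Fintype V] (r : ℕ) (hr : 2 ≤ r) (G : SimpleGraph V)
    [DecidableRel G.Adj] (h : IsMinRamseyCyc r G) :
    (∀ v : V, r + 1 ≤ G.degree v) ∧ ∃ v : V, G.degree v ≤ 2 * r - 1 :=
  ⟨RamseyCycAux.part1 r hr G h, RamseyCycAux.part2 r hr G h⟩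
end

section
/- Every minimal r-Ramsey graph for cyclicity (r ≥ 2) is 2-connected. -/
open SimpleGraph

section Aux

variable {V : Type*}

lemma liftWalk {G : SimpleGraph V} {S : Set V} {a b : V} (w : G.Walk a b) :
    (∀ x ∈ w.support, x ∈ S) → ∀ (ha : a ∈ S) (hb : b ∈ S),
      ∃ w' : (G.induce S).Walk ⟨a, ha⟩ ⟨b, hb⟩,
        w'.map (SimpleGraph.Embedding.induce S).toHom = w := by
  induction w with
  | nil => intro _ ha hb; exact ⟨.nil, rfl⟩
  | @cons u x b h p ih =>
    intro hs ha hb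
    obtain ⟨p', hp'⟩ := ih (fun y hy => hs y (by simp [hy])) (hs x (by simp)) hb
    refine ⟨.cons (by exact h) p', by exact congrArg (Walk.cons h) hp'⟩

lemma reachLift {G : SimpleGraph V} {S : Set V} {a b : V} (w : G.Walk a b)
    (hs : ∀ x ∈ w.support, x ∈ S) (ha : a ∈ S) (hb : b ∈ S) :
    (G.induce S).Reachable ⟨a, ha⟩ ⟨b, hb⟩ := by
  obtain ⟨w', -⟩ := liftWalk w hs ha hb
  exact ⟨w'⟩

lemma liftCycle {G : SimpleGraph V} {S : Set V} {x : V} (w : G.Walk x x)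
    (hc : w.IsCycle) (hs : ∀ y ∈ w.support, y ∈ S) :
    ∃ (x' : S) (w' : (G.induce S).Walk x' x'), w'.IsCycle ∧
      ∀ e ∈ w'.edges, Sym2.map (fun y : S => (y : V)) e ∈ w.edges := by
  have hx : x ∈ S := hs x w.start_mem_support
  obtain ⟨w', hw'⟩ := liftWalk w hs hx hx
  refine ⟨⟨x, hx⟩, w', ?_, ?_⟩
  · rw [← Walk.map_isCycle_iff_of_injective (f := (SimpleGraph.Embedding.induce S).toHom)
      (Subtype.val_injective)]
    rw [hw']; exact hc
  · intro e he
    have h2 : e.map (SimpleGraph.Embedding.induce (G := G) S).toHom ∈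
        (w'.map (SimpleGraph.Embedding.induce (G := G) S).toHom).edges := by
      rw [Walk.edges_map]; exact List.mem_map_of_mem he
    rw [hw'] at h2
    exact h2

lemma minNoMono {G : SimpleGraph V} {r : ℕ} (h : IsMinRamseyCyc r G) {S : Set V}
    (hS : S ≠ Set.univ) :
    ∃ c1 : Sym2 ↥S → Fin r, ∀ (x : ↥S) (w : (G.induce S).Walk x x), w.IsCycle →
      ∀ i, ∃ e ∈ w.edges, c1 e ≠ i := by
  classical
  set H : G.Subgraph :=
    ⟨S, fun a b => G.Adj a b ∧ a ∈ S ∧ b ∈ S, fun hab => hab.1, fun hab => hab.2.1,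
      ⟨fun a b hab => ⟨hab.1.symm, hab.2.2, hab.2.1⟩⟩⟩ with hH
  have hne : H ≠ ⊤ := by
    intro ht
    apply hS
    have : H.verts = (⊤ : G.Subgraph).verts := by rw [ht]
    simpa [hH] using this
  have hcoe : H.coe = G.induce S := by
    ext ⟨a, ha⟩ ⟨b, hb⟩
    simp only [Subgraph.coe_adj, hH, comap_adj, Function.Embedding.coe_subtype]
    exact ⟨fun h => h.1, fun h => ⟨h, ha, hb⟩⟩
  have hnr := h.2 H hne
  rw [hcoe] at hnr
  unfold IsRamseyCyc at hnr
  push_neg at hnr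
  obtain ⟨c1, hc1⟩ := hnr
  exact ⟨c1, hc1⟩

lemma splitNotRamsey {G : SimpleGraph V} {r : ℕ} (hr : 0 < r) (S T : Set V)
    (c1 : Sym2 ↥S → Fin r) (c2 : Sym2 ↥T → Fin r)
    (h1 : ∀ (x : ↥S) (w : (G.induce S).Walk x x), w.IsCycle → ∀ i, ∃ e ∈ w.edges, c1 e ≠ i)
    (h2 : ∀ (x : ↥T) (w : (G.induce T).Walk x x), w.IsCycle → ∀ i, ∃ e ∈ w.edges, c2 e ≠ i)
    (hdisj : ∀ a b, G.Adj a b → a ∈ S → b ∈ S → a ∈ T → b ∈ T → False)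
    (hsplit : ∀ (x : V) (w : G.Walk x x), w.IsCycle →
       (∀ y ∈ w.support, y ∈ S) ∨ (∀ y ∈ w.support, y ∈ T)) :
    ¬ IsRamseyCyc r G := by
  classical
  intro hram
  set f : V → V → Fin r := fun a b =>
    if h : a ∈ S ∧ b ∈ S then c1 s(⟨a, h.1⟩, ⟨b, h.2⟩)
    else if h' : a ∈ T ∧ b ∈ T then c2 s(⟨a, h'.1⟩, ⟨b, h'.2⟩)
    else ⟨0, hr⟩ with hf
  have hfsym : ∀ a b, f a b = f b a := by
    intro a b
    simp only [hf]
    by_cases h : a ∈ S ∧ b ∈ S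
    · rw [dif_pos h, dif_pos (And.intro h.2 h.1)]
      congr 1
      exact Sym2.eq_swap
    · rw [dif_neg h, dif_neg (fun h2 : b ∈ S ∧ a ∈ S => h ⟨h2.2, h2.1⟩)]
      by_cases h' : a ∈ T ∧ b ∈ T
      · rw [dif_pos h', dif_pos (And.intro h'.2 h'.1)]
        congr 1
        exact Sym2.eq_swap
      · rw [dif_neg h', dif_neg (fun h2 : b ∈ T ∧ a ∈ T => h' ⟨h2.2, h2.1⟩)]
  set c : Sym2 V → Fin r := Sym2.lift ⟨f, hfsym⟩ with hcdef
  obtain ⟨x, w, hc, i, hi⟩ := hram c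
  rcases hsplit x w hc with hcase | hcase
  · obtain ⟨x', w', hc', he'⟩ := liftCycle w hc hcase
    obtain ⟨e, he, hne⟩ := h1 x' w' hc' i
    apply hne
    induction e using Sym2.ind with
    | _ p q =>
      have hm := he' _ he
      have := hi _ hm
      rw [hcdef] at this
      simp only [Sym2.map_pair_eq, Sym2.lift_mk, hf] at this
      rw [dif_pos ⟨p.2, q.2⟩] at this
      simpa using this
  · obtain ⟨x', w', hc', he'⟩ := liftCycle w hc hcase
    obtain ⟨e, he, hne⟩ := h2 x' w' hc' i
    apply hne
    induction e using Sym2.ind with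
    | _ p q =>
      have hm := he' _ he
      have hadj : G.Adj (p : V) (q : V) := by
        have := w.edges_subset_edgeSet hm
        simpa using this
      have := hi _ hm
      rw [hcdef] at this
      simp only [Sym2.map_pair_eq, Sym2.lift_mk, hf] at this
      rw [dif_neg (fun hPS : (p : V) ∈ S ∧ (q : V) ∈ S =>
        hdisj _ _ hadj hPS.1 hPS.2 p.2 q.2), dif_pos ⟨p.2, q.2⟩] at this
      simpa using this

lemma mem_support_iff_mem_tail {G : SimpleGraph V} {x y : V} (w : G.Walk x x) (hn : ¬w.Nil) :
    y ∈ w.support ↔ y ∈ w.support.tail := by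
  constructor
  · intro h
    obtain ⟨u, hadj, p, rfl⟩ := Walk.not_nil_iff.mp hn
    simp only [Walk.support_cons, List.tail_cons]
    rcases List.mem_cons.mp h with rfl | h2
    · exact p.end_mem_support
    · simpa using h2
  · intro h; rw [w.support_eq_cons]; exact List.mem_cons_of_mem _ h

lemma mem_support_rotate [DecidableEq V] {G : SimpleGraph V} {x v y : V} (w : G.Walk x x)
    (hc : w.IsCycle) (hv : v ∈ w.support) :
    y ∈ (w.rotate v hv).support ↔ y ∈ w.support := by
  rw [mem_support_iff_mem_tail _ (hc.rotate hv).not_nil,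
    mem_support_iff_mem_tail _ hc.not_nil]
  exact (Walk.support_rotate w v hv).mem_iff

lemma takeUntil_avoid [DecidableEq V] {G : SimpleGraph V} {u v y : V} (p : G.Walk u v)
    (hnd : p.support.Nodup) (hy : y ∈ p.support) (hyv : y ≠ v) :
    v ∉ (p.takeUntil y hy).support := by
  intro hvq
  have hspec := p.take_spec hy
  have hsup : p.support = (p.takeUntil y hy).support ++ (p.dropUntil y hy).support.tail := by
    conv_lhs => rw [← hspec]
    exact Walk.support_append _ _
  rw [hsup, List.nodup_append] at hnd
  have hvd : v ∈ (p.dropUntil y hy).support.tail := by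
    have hvm : v ∈ (p.dropUntil y hy).support := (p.dropUntil y hy).end_mem_support
    rw [(p.dropUntil y hy).support_eq_cons] at hvm
    rcases List.mem_cons.mp hvm with h | h
    · exact absurd h.symm hyv
    · exact h
  exact hnd.2.2 v hvq v hvd rfl

lemma pivot [DecidableEq V] {G : SimpleGraph V} (v : V) {x : V} (w : G.Walk x x)
    (hc : w.IsCycle) :
    ∃ u, ∃ hu : u ≠ v, ∀ y ∈ w.support, ∀ hy : y ≠ v,
      (G.induce {z : V | z ≠ v}).Reachable ⟨u, hu⟩ ⟨y, hy⟩ := by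
  classical
  by_cases hv : v ∈ w.support
  · obtain ⟨u, hadj, p, hp⟩ := Walk.not_nil_iff.mp (hc.rotate hv).not_nil
    have hpn : p.support.Nodup := by
      have := (hc.rotate hv).2
      rw [hp] at this
      simpa using this
    refine ⟨u, hadj.ne', fun y hyw hy => ?_⟩
    have hyp : y ∈ p.support := by
      have : y ∈ (w.rotate v hv).support := (mem_support_rotate w hc hv).mpr hyw
      rw [hp] at this
      simp only [Walk.support_cons, List.mem_cons] at this
      rcases this with rfl | h
      · exact absurd rfl hy
      · exact h
    have havoid := takeUntil_avoid p hpn hyp hy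
    refine reachLift (p.takeUntil y hyp) (fun z hz => ?_) hadj.ne' hy
    intro hzv
    exact havoid (hzv ▸ hz)
  · have hxv : x ≠ v := fun hx => hv (hx ▸ w.start_mem_support)
    refine ⟨x, hxv, fun y hyw hy => ?_⟩
    refine reachLift (w.takeUntil y hyw) (fun z hz => ?_) hxv hy
    intro hzv
    exact hv (hzv ▸ Walk.support_takeUntil_subset w hyw hz)

end Aux

/-- every minimal `r`-Ramsey graph for cyclicity (`r ≥ 2`) is
2-connected: it has at least 3 vertices, is connected, and deleting any single
vertex leaves a connected graph. -/
theorem stmt6 {V : Type*} [Fintype V] (r : ℕ) (hr : 2 ≤ r) (G : SimpleGraph V)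
    (h : IsMinRamseyCyc r G) :
    3 ≤ Fintype.card V ∧ G.Connected ∧
      ∀ v : V, (G.induce {w : V | w ≠ v}).Connected := by
  classical
  have hr0 : 0 < r := by omega
  obtain ⟨hram, hmin⟩ := h
  have hcard : 3 ≤ Fintype.card V := by
    obtain ⟨x, w, hc, -⟩ := hram (fun _ => ⟨0, hr0⟩)
    have h3 : 3 ≤ w.length := hc.three_le_length
    have hnd : w.support.tail.Nodup := hc.2
    have hlen : w.support.tail.length = w.length := by
      rw [List.length_tail, w.length_support]
      omega
    calc 3 ≤ w.length := h3
      _ = w.support.tail.length := hlen.symm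
      _ ≤ Fintype.card V := hnd.length_le_card
  refine ⟨hcard, ?_, ?_⟩
  · rw [connected_iff]
    refine ⟨?_, Fintype.card_pos_iff.mp (by omega)⟩
    by_contra hpre
    rw [Preconnected] at hpre
    push_neg at hpre
    obtain ⟨x₀, y₀, hxy⟩ := hpre
    have hSne : {z : V | G.Reachable x₀ z} ≠ Set.univ := by
      intro hS
      exact hxy (by have : y₀ ∈ {z : V | G.Reachable x₀ z} := hS ▸ Set.mem_univ y₀; exact this)
    have hTne : {z : V | ¬ G.Reachable x₀ z} ≠ Set.univ := by
      intro hT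
      have : x₀ ∈ {z : V | ¬ G.Reachable x₀ z} := hT ▸ Set.mem_univ x₀
      exact this (Reachable.refl x₀)
    obtain ⟨c1, h1⟩ := minNoMono ⟨hram, hmin⟩ hSne
    obtain ⟨c2, h2⟩ := minNoMono ⟨hram, hmin⟩ hTne
    refine splitNotRamsey hr0 _ _ c1 c2 h1 h2 ?_ ?_ hram
    · intro a b _ haS _ haT _
      exact haT haS
    · intro x w hc
      by_cases hx : G.Reachable x₀ x
      · left
        intro y hy
        exact hx.trans (w.takeUntil y hy).reachable
      · right
        intro y hy
        intro hry
        exact hx (hry.trans (w.takeUntil y hy).reachable.symm)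
  · intro v
    rw [connected_iff]
    refine ⟨?_, ?_⟩
    swap
    · obtain ⟨z, hz⟩ := Fintype.exists_ne_of_one_lt_card (by omega) v
      exact ⟨⟨z, hz⟩⟩
    by_contra hpre
    rw [Preconnected] at hpre
    push_neg at hpre
    obtain ⟨a, b, hab⟩ := hpre
    set G' : SimpleGraph {w : V | w ≠ v} := G.induce {w : V | w ≠ v} with hG'
    set S : Set V := {z | z = v ∨ ∃ hz : z ≠ v, G'.Reachable a ⟨z, hz⟩} with hS
    set T : Set V := {z | z = v ∨ ∃ hz : z ≠ v, ¬ G'.Reachable a ⟨z, hz⟩} with hT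
    have hSne : S ≠ Set.univ := by
      intro hSu
      have hb : (b : V) ∈ S := hSu ▸ Set.mem_univ _
      rcases hb with hb | ⟨hz, hreach⟩
      · exact b.2 hb
      · exact hab (by convert hreach)
    have hTne : T ≠ Set.univ := by
      intro hTu
      have ha : (a : V) ∈ T := hTu ▸ Set.mem_univ _
      rcases ha with ha | ⟨hz, hreach⟩
      · exact a.2 ha
      · exact hreach (by convert Reachable.refl a)
    obtain ⟨c1, h1⟩ := minNoMono ⟨hram, hmin⟩ hSne
    obtain ⟨c2, h2⟩ := minNoMono ⟨hram, hmin⟩ hTne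
    refine splitNotRamsey hr0 S T c1 c2 h1 h2 ?_ ?_ hram
    · intro p q hadj hpS hqS hpT hqT
      have hpv : p = v := by
        rcases hpS with hpv | ⟨hz, hreach⟩
        · exact hpv
        · rcases hpT with hpv | ⟨hz', hnreach⟩
          · exact hpv
          · exact absurd hreach hnreach
      have hqv : q = v := by
        rcases hqS with hqv | ⟨hz, hreach⟩
        · exact hqv
        · rcases hqT with hqv | ⟨hz', hnreach⟩
          · exact hqv
          · exact absurd hreach hnreach
      rw [hpv, hqv] at hadj
      exact G.irrefl hadj
    · intro x w hc
      obtain ⟨u, hu, hreach⟩ := pivot v w hc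
      by_cases hru : G'.Reachable a ⟨u, hu⟩
      · left
        intro y hy
        by_cases hyv : y = v
        · exact Or.inl hyv
        · exact Or.inr ⟨hyv, hru.trans (hreach y hy hyv)⟩
      · right
        intro y hy
        by_cases hyv : y = v
        · exact Or.inl hyv
        · exact Or.inr ⟨hyv, fun hray => hru (hray.trans (hreach y hy hyv).symm)⟩
end

section
/- If G is 2-Ramsey for cyclicity and e is an edge of G contained in at most one triangle of G, then the graph G/e obtained from G by contracting e is also 2-Ramsey for cyclicity. -/
open SimpleGraph Walk

/-- The contraction `G/uv`: the vertex `v` is merged into `u` (so `v` becomes an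
isolated vertex), loops are discarded and parallel edges merged. -/
def contractEdge {V : Type*} (G : SimpleGraph V) (u v : V) : SimpleGraph V :=
  SimpleGraph.fromRel (fun a b =>
    a ≠ v ∧ b ≠ v ∧ (G.Adj a b ∨ (a = u ∧ G.Adj v b) ∨ (b = u ∧ G.Adj v a)))

section Aux

variable {V : Type*}

/-- In a path, an edge containing the first vertex must be the first edge. -/
lemma startEdge {H : SimpleGraph V} {a c x : V} {p : H.Walk a c} (hp : p.IsPath)
    (hx : s(a, x) ∈ p.edges) : ∃ (h : H.Adj a x) (q : H.Walk x c), p = Walk.cons h q := by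
  cases p with
  | nil => simp at hx
  | cons h' q' =>
    rw [Walk.edges_cons, List.mem_cons] at hx
    rcases hx with heq | hmem
    · rw [Sym2.eq_iff] at heq
      rcases heq with ⟨-, hxb⟩ | ⟨hab, -⟩
      · subst hxb; exact ⟨h', q', rfl⟩
      · exact absurd hab h'.ne
    · exact absurd (q'.fst_mem_support_of_mem_edges hmem)
        ((Walk.cons_isPath_iff _ _).mp hp).2

/-- Destructure a walk between distinct vertices as a cons. -/
lemma destructWalk {H : SimpleGraph V} {a b : V} (p : H.Walk a b) (hne : a ≠ b) :
    ∃ (w : V) (h : H.Adj a w) (q : H.Walk w b), p = Walk.cons h q := by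
  cases p with
  | nil => exact absurd rfl hne
  | cons h q => exact ⟨_, h, q, rfl⟩

lemma map_mem_cases {f : V → V} {l : List (Sym2 V)} {x y : V}
    (h : s(x, y) ∈ l.map (Sym2.map f)) : ∃ a b, s(a, b) ∈ l ∧ f a = x ∧ f b = y := by
  obtain ⟨e, he, heq⟩ := List.mem_map.mp h
  induction e using Sym2.ind with
  | _ a b =>
    rw [Sym2.map_pair_eq, Sym2.eq_iff] at heq
    rcases heq with ⟨h1, h2⟩ | ⟨h1, h2⟩
    · exact ⟨a, b, he, h1, h2⟩
    · exact ⟨b, a, by rwa [Sym2.eq_swap], h2, h1⟩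

variable [DecidableEq V] {H : SimpleGraph V} {u v : V}

/-- Build a cycle from an edge together with a walk back avoiding that edge. -/
lemma helperCycle {K : SimpleGraph V} {a b : V} (hab : K.Adj a b) (p : K.Walk b a)
    (hp : s(a, b) ∉ p.edges) : ∃ (x : V) (w : K.Walk x x), w.IsCycle :=
  ⟨a, Walk.cons hab p.bypass, (Walk.cons_isCycle_iff _ _).mpr
    ⟨p.bypass_isPath, fun hmem => hp (p.edges_bypass_subset hmem)⟩⟩

/-- The projection `v ↦ u` is a graph homomorphism from `H` minus the edge `uv`
to the contraction. -/
def contractHom (hne : u ≠ v) : H.deleteEdges {s(u, v)} →g contractEdge H u v where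
  toFun z := if z = v then u else z
  map_rel' := by
    intro a b hab
    rw [SimpleGraph.deleteEdges_adj, Set.mem_singleton_iff] at hab
    obtain ⟨hadj, hne'⟩ := hab
    show (contractEdge H u v).Adj _ _
    rw [contractEdge, SimpleGraph.fromRel_adj]
    by_cases ha : a = v <;> by_cases hb : b = v
    · exact absurd (ha.trans hb.symm) hadj.ne
    · subst ha
      have hbu : b ≠ u := by
        rintro rfl; exact hne' (Sym2.eq_swap)
      simp only [if_pos rfl, if_neg hb]
      exact ⟨fun hh => hbu hh.symm, Or.inl ⟨hne, hb, Or.inr (Or.inl ⟨rfl, hadj⟩)⟩⟩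
    · subst hb
      have hau : a ≠ u := by
        rintro rfl; exact hne' rfl
      simp only [if_pos rfl, if_neg ha]
      exact ⟨hau, Or.inl ⟨ha, hne, Or.inr (Or.inr ⟨rfl, hadj.symm⟩)⟩⟩
    · simp only [if_neg ha, if_neg hb]
      exact ⟨hadj.ne, Or.inl ⟨ha, hb, Or.inl hadj⟩⟩

/-- Map a walk of `H` avoiding the edge `uv` into the contraction. -/
def mapWalk (hne : u ≠ v) {a b : V} (p : H.Walk a b) (hp : ∀ e ∈ p.edges, e ≠ s(u, v)) :
    (contractEdge H u v).Walk (if a = v then u else a) (if b = v then u else b) :=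
  Walk.map (contractHom hne)
    (p.transfer _ (fun e he => by
      rw [SimpleGraph.edgeSet_deleteEdges]
      exact ⟨p.edges_subset_edgeSet he, hp e he⟩))

lemma mapWalk_edges (hne : u ≠ v) {a b : V} (p : H.Walk a b)
    (hp : ∀ e ∈ p.edges, e ≠ s(u, v)) :
    (mapWalk hne p hp).edges = p.edges.map (Sym2.map (fun z => if z = v then u else z)) := by
  refine (Walk.edges_map (contractHom hne) _).trans ?_
  rw [Walk.edges_transfer]
  rfl

lemma contract_adj_of_adj (hne : u ≠ v) {a b : V} (hav : a ≠ v) (hbv : b ≠ v)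
    (h : H.Adj a b) : (contractEdge H u v).Adj a b := by
  rw [contractEdge, SimpleGraph.fromRel_adj]
  exact ⟨h.ne, Or.inl ⟨hav, hbv, Or.inl h⟩⟩

lemma contract_adj_of_adj_v (hne : u ≠ v) {b : V} (hbv : b ≠ v) (hbu : b ≠ u)
    (h : H.Adj v b) : (contractEdge H u v).Adj u b := by
  rw [contractEdge, SimpleGraph.fromRel_adj]
  exact ⟨fun hh => hbu hh.symm, Or.inl ⟨hne, hbv, Or.inr (Or.inl ⟨rfl, h⟩)⟩⟩

/-- Case A of the contraction argument: a cycle through the edge `uv`. -/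
lemma caseA (hne : u ≠ v) (h0 : H.Adj v u) (pF : H.Walk u v)
    (hcyc : (Walk.cons h0 pF).IsCycle) :
    (∃ (x : V) (w : (contractEdge H u v).Walk x x), w.IsCycle) ∨
      (∃ w, H.Adj u w ∧ H.Adj v w) := by
  obtain ⟨hpath, hs⟩ := (Walk.cons_isCycle_iff _ _).mp hcyc
  obtain ⟨w, h1, q2, rfl⟩ := destructWalk pF hne
  obtain ⟨hq2path, hu_not⟩ := (Walk.cons_isPath_iff _ _).mp hpath
  have hwv : w ≠ v := by
    rintro rfl
    refine hs ?_
    rw [Walk.edges_cons]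
    exact List.mem_cons.mpr (Or.inl Sym2.eq_swap)
  have hwu : w ≠ u := h1.ne'
  by_cases hvw : s(v, w) ∈ q2.edges
  · obtain ⟨hwv', -, -⟩ := startEdge hq2path (by rwa [Sym2.eq_swap] at hvw)
    exact Or.inr ⟨w, h1, hwv'.symm⟩
  · left
    have havoid : ∀ e ∈ q2.edges, e ≠ s(u, v) := by
      intro e he heq
      refine hs ?_
      rw [Walk.edges_cons]
      refine List.mem_cons_of_mem _ ?_
      rw [Sym2.eq_swap]
      exact heq ▸ he
    have hKadj : (contractEdge H u v).Adj u w := contract_adj_of_adj hne hne hwv h1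
    refine helperCycle hKadj ((mapWalk hne q2 havoid).copy (if_neg hwv) (if_pos rfl)) ?_
    intro hmem
    rw [Walk.edges_copy, mapWalk_edges] at hmem
    obtain ⟨a', b', he, ha', hb'⟩ := map_mem_cases hmem
    have hb'w : b' = w := by
      by_cases hbv : b' = v
      · rw [if_pos hbv] at hb'; exact absurd hb'.symm hwu
      · rwa [if_neg hbv] at hb'
    rw [hb'w] at he
    by_cases ha'' : a' = v
    · rw [ha''] at he; exact hvw he
    · rw [if_neg ha''] at ha'
      rw [ha'] at he
      exact hu_not (q2.fst_mem_support_of_mem_edges he)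

/-- Case B of the contraction argument: a cycle through `v` avoiding the edge `uv`. -/
lemma caseB (hne : u ≠ v) (hsub : {w : V | H.Adj u w ∧ H.Adj v w}.Subsingleton)
    (D : H.Walk v v) (hDc : D.IsCycle) (hDe : s(u, v) ∉ D.edges) :
    ∃ (x : V) (w : (contractEdge H u v).Walk x x), w.IsCycle := by
  obtain ⟨y, h, p, rfl⟩ : ∃ (y : V) (h : H.Adj v y) (p : H.Walk y v), D = Walk.cons h p := by
    cases D with
    | nil => have := hDc.three_le_length; simp at this
    | cons h p => exact ⟨_, h, p, rfl⟩
  obtain ⟨hppath, hsvy⟩ := (Walk.cons_isCycle_iff _ _).mp hDc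
  have hyv : y ≠ v := h.ne'
  have hyu : y ≠ u := by
    rintro rfl
    refine hDe ?_
    rw [Walk.edges_cons]
    exact List.mem_cons.mpr (Or.inl Sym2.eq_swap)
  have hpuv : ∀ e ∈ p.edges, e ≠ s(u, v) := by
    intro e he heq
    refine hDe ?_
    rw [Walk.edges_cons]
    exact List.mem_cons_of_mem _ (heq ▸ he)
  by_cases hu : u ∈ p.support
  · -- the cycle passes through both u and v
    have hp₁ : (p.takeUntil u hu).IsPath := hppath.takeUntil hu
    have hp₂ : (p.dropUntil u hu).IsPath := hppath.dropUntil hu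
    obtain ⟨w, h₂, r, hr⟩ := destructWalk (p.dropUntil u hu) hne
    obtain ⟨hrpath, hur_not⟩ := (Walk.cons_isPath_iff _ _).mp (hr ▸ hp₂)
    have hwv : w ≠ v := by
      rintro rfl
      refine hpuv _ (p.edges_dropUntil_subset hu ?_) rfl
      rw [hr, Walk.edges_cons]
      exact List.mem_cons_self
    have hwu : w ≠ u := h₂.ne'
    by_cases hvw : s(v, w) ∈ r.edges
    · -- w is a common neighbour; use the other segment
      have hrrev : s(v, w) ∈ r.reverse.edges := by
        rw [Walk.edges_reverse, List.mem_reverse]; exact hvw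
      obtain ⟨hvw', -, -⟩ := startEdge hrpath.reverse hrrev
      have hKadj : (contractEdge H u v).Adj u y :=
        contract_adj_of_adj_v hne hyv hyu h
      have havoid₁ : ∀ e ∈ (p.takeUntil u hu).edges, e ≠ s(u, v) :=
        fun e he => hpuv e (p.edges_takeUntil_subset hu he)
      refine helperCycle hKadj
        ((mapWalk hne (p.takeUntil u hu) havoid₁).copy (if_neg hyv) (if_neg hne)) ?_
      intro hmem
      rw [Walk.edges_copy, mapWalk_edges] at hmem
      obtain ⟨a', b', he, ha', hb'⟩ := map_mem_cases hmem
      have hb'y : b' = y := by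
        by_cases hbv : b' = v
        · rw [if_pos hbv] at hb'; exact absurd hb' hyu.symm
        · rwa [if_neg hbv] at hb'
      rw [hb'y] at he
      by_cases ha'' : a' = v
      · rw [ha''] at he
        exact hsvy (p.edges_takeUntil_subset hu he)
      · rw [if_neg ha''] at ha'
        rw [ha'] at he
        obtain ⟨hyu', -, -⟩ := startEdge hp₁ (by rwa [Sym2.eq_swap] at he)
        have hcomm : y = w := hsub ⟨hyu'.symm, h⟩ ⟨h₂, hvw'⟩
        have hnodup : p.support.Nodup := hppath.support_nodup
        rw [← p.take_spec hu, Walk.support_append] at hnodup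
        obtain ⟨-, -, hdisj⟩ := List.nodup_append'.mp hnodup
        refine hdisj (p.takeUntil u hu).start_mem_support ?_
        rw [hr, Walk.support_cons, List.tail_cons, hcomm]
        exact r.start_mem_support
    · -- use the segment from u to v directly
      have hKadj : (contractEdge H u v).Adj u w := contract_adj_of_adj hne hne hwv h₂
      have havoid_r : ∀ e ∈ r.edges, e ≠ s(u, v) := by
        intro e he
        refine hpuv e (p.edges_dropUntil_subset hu ?_)
        rw [hr, Walk.edges_cons]
        exact List.mem_cons_of_mem _ he
      refine helperCycle hKadj
        ((mapWalk hne r havoid_r).copy (if_neg hwv) (if_pos rfl)) ?_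
      intro hmem
      rw [Walk.edges_copy, mapWalk_edges] at hmem
      obtain ⟨a', b', he, ha', hb'⟩ := map_mem_cases hmem
      have hb'w : b' = w := by
        by_cases hbv : b' = v
        · rw [if_pos hbv] at hb'; exact absurd hb'.symm hwu
        · rwa [if_neg hbv] at hb'
      rw [hb'w] at he
      by_cases ha'' : a' = v
      · rw [ha''] at he; exact hvw he
      · rw [if_neg ha''] at ha'
        rw [ha'] at he
        exact hur_not (r.fst_mem_support_of_mem_edges he)
  · -- the cycle passes through v but not u
    have hKadj : (contractEdge H u v).Adj u y := contract_adj_of_adj_v hne hyv hyu h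
    refine helperCycle hKadj
      ((mapWalk hne p hpuv).copy (if_neg hyv) (if_pos rfl)) ?_
    intro hmem
    rw [Walk.edges_copy, mapWalk_edges] at hmem
    obtain ⟨a', b', he, ha', hb'⟩ := map_mem_cases hmem
    have hb'y : b' = y := by
      by_cases hbv : b' = v
      · rw [if_pos hbv] at hb'; exact absurd hb' hyu.symm
      · rwa [if_neg hbv] at hb'
    rw [hb'y] at he
    by_cases ha'' : a' = v
    · rw [ha''] at he; exact hsvy he
    · rw [if_neg ha''] at ha'
      rw [ha'] at he
      exact hu (p.fst_mem_support_of_mem_edges he)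

/-- Core lemma: a cycle in `H` yields either a cycle in the contraction or a common
neighbour of `u` and `v` (coming from a cycle through the edge `uv`). -/
lemma coreLemma (hne : u ≠ v) (hsub : {w : V | H.Adj u w ∧ H.Adj v w}.Subsingleton)
    {x : V} (C : H.Walk x x) (hC : C.IsCycle) :
    (∃ (y : V) (w : (contractEdge H u v).Walk y y), w.IsCycle) ∨
      (s(u, v) ∈ C.edges ∧ ∃ w, H.Adj u w ∧ H.Adj v w) := by
  by_cases hA : s(u, v) ∈ C.edges
  · have hvs : v ∈ C.support := C.snd_mem_support_of_mem_edges hA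
    have hDc : (C.rotate v hvs).IsCycle := hC.rotate hvs
    have hDe : s(u, v) ∈ (C.rotate v hvs).edges := ((C.rotate_edges v hvs).mem_iff).mpr hA
    suffices hsuff : (∃ (y : V) (w : (contractEdge H u v).Walk y y), w.IsCycle) ∨
        (∃ w, H.Adj u w ∧ H.Adj v w) by
      rcases hsuff with h' | h'
      · exact Or.inl h'
      · exact Or.inr ⟨hA, h'⟩
    obtain ⟨y, h, p, hDeq⟩ : ∃ (y : V) (h : H.Adj v y) (p : H.Walk y v),
        C.rotate v hvs = Walk.cons h p := by
      cases hD : C.rotate v hvs with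
      | nil => rw [hD] at hDc; have := hDc.three_le_length; simp at this
      | cons h p => exact ⟨_, h, p, rfl⟩
    rw [hDeq] at hDc hDe
    obtain ⟨hppath, hsvy⟩ := (Walk.cons_isCycle_iff _ _).mp hDc
    by_cases hy : y = u
    · subst hy
      exact caseA hne h p hDc
    · have hpe : s(u, v) ∈ p.edges := by
        rw [Walk.edges_cons] at hDe
        rcases List.mem_cons.mp hDe with heq | hmem
        · rw [Sym2.eq_iff] at heq
          rcases heq with ⟨huv', -⟩ | ⟨huy, -⟩
          · exact absurd huv' hne
          · exact absurd huy.symm hy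
        · exact hmem
      have hrev : s(v, u) ∈ p.reverse.edges := by
        rw [Walk.edges_reverse, List.mem_reverse, Sym2.eq_swap]
        exact hpe
      obtain ⟨hvu, q, hq⟩ := startEdge hppath.reverse hrev
      obtain ⟨hqpath, hv_not⟩ := (Walk.cons_isPath_iff _ _).mp (hq ▸ hppath.reverse)
      have hpF : (q.concat h.symm).IsPath := by
        have h1 : (q.concat h.symm).reverse.IsPath := by
          rw [Walk.reverse_concat, Walk.cons_isPath_iff]
          exact ⟨hqpath.reverse, by rwa [Walk.support_reverse, List.mem_reverse]⟩
        have h2 := h1.reverse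
        rwa [Walk.reverse_reverse] at h2
      have hnodupsvu : s(v, u) ∉ q.edges := by
        have htrail : (Walk.cons hvu q).IsTrail := (hq ▸ hppath.reverse).isTrail
        have := htrail.edges_nodup
        rw [Walk.edges_cons] at this
        exact (List.nodup_cons.mp this).1
      have hsvu_not : s(v, u) ∉ (q.concat h.symm).edges := by
        rw [Walk.edges_concat, List.concat_eq_append]
        intro hmem
        rcases List.mem_append.mp hmem with hmem' | heq
        · exact hnodupsvu hmem'
        · rw [List.mem_singleton, Sym2.eq_iff] at heq
          rcases heq with ⟨hvy, -⟩ | ⟨-, huy⟩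
          · exact h.ne hvy
          · exact hy huy.symm
      have hcyc2 : (Walk.cons hvu (q.concat h.symm)).IsCycle :=
        (Walk.cons_isCycle_iff _ _).mpr ⟨hpF, hsvu_not⟩
      exact caseA hne hvu (q.concat h.symm) hcyc2
  · left
    by_cases hv : v ∈ C.support
    · exact caseB hne hsub (C.rotate v hv) (hC.rotate hv)
        (fun hmem => hA (((C.rotate_edges v hv).mem_iff).mp hmem))
    · obtain ⟨b, h, p, hCeq⟩ : ∃ (b : V) (h : H.Adj x b) (p : H.Walk b x),
          C = Walk.cons h p := by
        cases hD : C with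
        | nil => rw [hD] at hC; have := hC.three_le_length; simp at this
        | cons h p => exact ⟨_, h, p, rfl⟩
      rw [hCeq] at hC hA
      rw [hCeq, Walk.support_cons] at hv
      have hxv : x ≠ v := by rintro rfl; exact hv (List.mem_cons_self)
      have hvp : v ∉ p.support := fun hh => hv (List.mem_cons_of_mem _ hh)
      obtain ⟨hppath, hsxb⟩ := (Walk.cons_isCycle_iff _ _).mp hC
      have hbv : b ≠ v := fun hh => hvp (hh ▸ p.start_mem_support)
      have hKadj : (contractEdge H u v).Adj x b := contract_adj_of_adj hne hxv hbv h
      have havoid : ∀ e ∈ p.edges, e ≠ s(u, v) := by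
        intro e he heq
        refine hA ?_
        rw [Walk.edges_cons]
        exact List.mem_cons_of_mem _ (heq ▸ he)
      refine helperCycle hKadj
        ((mapWalk hne p havoid).copy (if_neg hbv) (if_neg hxv)) ?_
      intro hmem
      rw [Walk.edges_copy, mapWalk_edges] at hmem
      obtain ⟨a', b', he, ha', hb'⟩ := map_mem_cases hmem
      have ha'' : a' ≠ v := fun hh => hvp (hh ▸ p.fst_mem_support_of_mem_edges he)
      have hb'' : b' ≠ v := fun hh => hvp (hh ▸ p.snd_mem_support_of_mem_edges he)
      rw [if_neg ha''] at ha'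
      rw [if_neg hb''] at hb'
      rw [ha', hb'] at he
      exact hsxb he

end Aux

/-- The subgraph of `G` consisting of edges with colour `i`. -/
def colorSub {V : Type*} (G : SimpleGraph V) (c' : Sym2 V → Fin 2) (i : Fin 2) :
    SimpleGraph V where
  Adj a b := G.Adj a b ∧ c' s(a, b) = i
  symm := ⟨fun a b hh => ⟨hh.1.symm, by rw [Sym2.eq_swap]; exact hh.2⟩⟩
  loopless := ⟨fun a hh => G.loopless.irrefl a hh.1⟩

/-- if `G` is 2-Ramsey for cyclicity and the edge `uv` lies in at most
one triangle (at most one common neighbour of `u` and `v`), then `G/uv` is also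
2-Ramsey for cyclicity. -/
theorem stmt7 {V : Type*} [Fintype V] (G : SimpleGraph V) (u v : V) (huv : G.Adj u v)
    (htri : {w : V | G.Adj u w ∧ G.Adj v w}.Subsingleton)
    (h : IsRamseyCyc 2 G) : IsRamseyCyc 2 (contractEdge G u v) := by
  classical
  intro c
  set π : V → V := fun z => if z = v then u else z with hπ
  set bad : Fin 2 := if hw : ∃ w, G.Adj u w ∧ G.Adj v w then c s(u, hw.choose) else 0
    with hbad
  set c' : Sym2 V → Fin 2 := fun e => if e = s(u, v) then bad + 1 else c (e.map π)
    with hc'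
  obtain ⟨x, W, hWc, i, hmono⟩ := h c'
  have hsubset : ∀ e ∈ W.edges, e ∈ (colorSub G c' i).edgeSet := by
    intro e he
    induction e using Sym2.ind with
    | _ a b =>
      rw [SimpleGraph.mem_edgeSet]
      exact ⟨W.edges_subset_edgeSet he, hmono _ he⟩
  have hWsc : (W.transfer (colorSub G c' i) hsubset).IsCycle := hWc.transfer hsubset
  have hsub2 : {w : V | (colorSub G c' i).Adj u w ∧ (colorSub G c' i).Adj v w}.Subsingleton :=
    fun a ha b hb => htri ⟨ha.1.1, ha.2.1⟩ ⟨hb.1.1, hb.2.1⟩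
  have hπv : π v = u := by simp [hπ]
  have hπne : ∀ z : V, z ≠ v → π z = z := fun z hz => by simp [hπ, hz]
  rcases coreLemma huv.ne hsub2 (W.transfer (colorSub G c' i) hsubset) hWsc with
    ⟨y, D, hDc⟩ | ⟨hmem, w, hw1, hw2⟩
  · -- lift the cycle from the contracted colour subgraph
    have key : ∀ a b : V, a ≠ b →
        (a ≠ v ∧ b ≠ v ∧ ((colorSub G c' i).Adj a b ∨
          (a = u ∧ (colorSub G c' i).Adj v b) ∨ (b = u ∧ (colorSub G c' i).Adj v a))) →
        c s(a, b) = i := by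
      intro a b hab hyp
      obtain ⟨hav, hbv, hcase⟩ := hyp
      rcases hcase with h' | ⟨rfl, h'⟩ | ⟨rfl, h'⟩
      · have h2 := h'.2
        rw [hc'] at h2
        simp only at h2
        rw [if_neg (by
          intro heq
          rw [Sym2.eq_iff] at heq
          rcases heq with ⟨-, hbv'⟩ | ⟨hav', -⟩
          · exact hbv hbv'
          · exact hav hav')] at h2
        rwa [Sym2.map_pair_eq, hπne a hav, hπne b hbv] at h2
      · have h2 := h'.2
        rw [hc'] at h2
        simp only at h2
        rw [if_neg (by
          intro heq
          rw [Sym2.eq_iff] at heq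
          rcases heq with ⟨hvu, -⟩ | ⟨-, hbu⟩
          · exact huv.ne hvu.symm
          · exact hab hbu.symm)] at h2
        rwa [Sym2.map_pair_eq, hπv, hπne b hbv] at h2
      · have h2 := h'.2
        rw [hc'] at h2
        simp only at h2
        rw [if_neg (by
          intro heq
          rw [Sym2.eq_iff] at heq
          rcases heq with ⟨hvu, -⟩ | ⟨-, hau⟩
          · exact huv.ne hvu.symm
          · exact hab hau)] at h2
        rw [Sym2.map_pair_eq, hπv, hπne a hav] at h2
        rwa [Sym2.eq_swap] at h2
    have hlift : ∀ e ∈ D.edges, e ∈ (contractEdge G u v).edgeSet ∧ c e = i := by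
      intro e he
      have heK := D.edges_subset_edgeSet he
      revert heK
      induction e using Sym2.ind with
      | _ a b =>
        intro heK
        rw [SimpleGraph.mem_edgeSet] at heK
        rw [contractEdge, SimpleGraph.fromRel_adj] at heK
        obtain ⟨hab, hrel⟩ := heK
        constructor
        · rw [SimpleGraph.mem_edgeSet, contractEdge, SimpleGraph.fromRel_adj]
          refine ⟨hab, ?_⟩
          rcases hrel with ⟨h1, h2, h3⟩ | ⟨h1, h2, h3⟩
          · exact Or.inl ⟨h1, h2, by
              rcases h3 with h4 | ⟨h4, h5⟩ | ⟨h4, h5⟩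
              · exact Or.inl h4.1
              · exact Or.inr (Or.inl ⟨h4, h5.1⟩)
              · exact Or.inr (Or.inr ⟨h4, h5.1⟩)⟩
          · exact Or.inr ⟨h1, h2, by
              rcases h3 with h4 | ⟨h4, h5⟩ | ⟨h4, h5⟩
              · exact Or.inl h4.1
              · exact Or.inr (Or.inl ⟨h4, h5.1⟩)
              · exact Or.inr (Or.inr ⟨h4, h5.1⟩)⟩
        · rcases hrel with hR | hR
          · exact key a b hab hR
          · rw [Sym2.eq_swap]
            exact key b a hab.symm hR
    refine ⟨y, D.transfer (contractEdge G u v) (fun e he => (hlift e he).1),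
      hDc.transfer _, i, ?_⟩
    intro e he
    rw [Walk.edges_transfer] at he
    exact (hlift e he).2
  · -- the monochromatic cycle was the triangle through uv: contradiction
    exfalso
    have hmem' : s(u, v) ∈ W.edges := by rwa [Walk.edges_transfer] at hmem
    have h1 : c' s(u, v) = i := hmono _ hmem'
    rw [hc'] at h1
    simp only [if_pos rfl] at h1
    have hwG : G.Adj u w ∧ G.Adj v w := ⟨hw1.1, hw2.1⟩
    have hex : ∃ w, G.Adj u w ∧ G.Adj v w := ⟨w, hwG⟩
    have hbad2 : bad = c s(u, hex.choose) := by rw [hbad, dif_pos hex]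
    have hcc : hex.choose = w := htri hex.choose_spec hwG
    have h3 : c' s(u, w) = i := hw1.2
    have hwv : w ≠ v := hw2.1.ne'
    rw [hc'] at h3
    simp only at h3
    rw [if_neg (by
      intro heq
      rw [Sym2.eq_iff] at heq
      rcases heq with ⟨-, hwv'⟩ | ⟨huv', -⟩
      · exact hwv hwv'
      · exact huv.ne huv'), Sym2.map_pair_eq, hπne u huv.ne, hπne w hwv] at h3
    have h4 : bad = i := by rw [hbad2, hcc]; exact h3
    rw [h4] at h1
    exact (by decide : ∀ j : Fin 2, ¬j + 1 = j) i h1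
end

section
/- Let G be a minimal 2-Ramsey graph for cyclicity and let vw be an edge of G. Let G* be obtained from G by replacing edge vw with a diamond: add two new vertices x, y with x adjacent to v, w, y and y adjacent to v, w, x, and delete edge vw. Then G* is a minimal 2-Ramsey graph for cyclicity. -/
/-- Construction (2): replace the edge `vw` of `G` by a diamond: add new vertices
`x = inr 0` and `y = inr 1`, each adjacent to `v`, `w` and to each other, and delete
the edge `vw`. -/
def diamondExtension {V : Type*} (G : SimpleGraph V) (v w : V) : SimpleGraph (V ⊕ Fin 2) :=
  SimpleGraph.fromRel (fun a b =>
    (∃ x y : V, a = Sum.inl x ∧ b = Sum.inl y ∧ G.Adj x y ∧ s(x, y) ≠ s(v, w)) ∨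
    (a = Sum.inl v ∧ (b = Sum.inr 0 ∨ b = Sum.inr 1)) ∨
    (a = Sum.inl w ∧ (b = Sum.inr 0 ∨ b = Sum.inr 1)) ∨
    (a = Sum.inr 0 ∧ b = Sum.inr 1))


open SimpleGraph Sum

section Infra
variable {A B : Type*}

lemma del_adj {M : SimpleGraph A} {e : Sym2 A} {p q : A} :
    (M \ SimpleGraph.fromEdgeSet {e}).Adj p q ↔ M.Adj p q ∧ s(p,q) ≠ e := by
  constructor
  · rintro ⟨h1, h2⟩
    exact ⟨h1, fun he => h2 ((SimpleGraph.fromEdgeSet_adj _).2 ⟨by simp [he], h1.ne⟩)⟩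
  · rintro ⟨h1, h2⟩
    refine ⟨h1, fun hc => h2 ?_⟩
    simpa using ((SimpleGraph.fromEdgeSet_adj _).1 hc).1

lemma exists_cycle_of_adj_reach {M : SimpleGraph A} {a b : A} (h1 : M.Adj a b)
    (h2 : (M \ SimpleGraph.fromEdgeSet {s(a,b)}).Reachable a b) :
    ∃ u, ∃ W : M.Walk u u, W.IsCycle :=
  let ⟨u, W, hW, _⟩ := (SimpleGraph.adj_and_reachable_delete_edges_iff_exists_cycle).1 ⟨h1, h2⟩
  ⟨u, W, hW⟩

lemma cycle_first_edge {M : SimpleGraph A} {u : A} {W : M.Walk u u} (hW : W.IsCycle) :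
    ∃ a b, s(a,b) ∈ W.edges := by
  cases W with
  | nil => exact absurd hW SimpleGraph.Walk.IsCycle.not_of_nil
  | @cons u b _ h q =>
    refine ⟨u, b, ?_⟩
    rw [SimpleGraph.Walk.edges_cons]
    exact List.mem_cons_self

lemma reach_of_cycle_edge {M : SimpleGraph A} {u a b : A} {W : M.Walk u u} (hW : W.IsCycle)
    (he : s(a,b) ∈ W.edges) :
    M.Adj a b ∧ (M \ SimpleGraph.fromEdgeSet {s(a,b)}).Reachable a b :=
  SimpleGraph.adj_and_reachable_delete_edges_iff_exists_cycle.2 ⟨u, W, hW, he⟩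

lemma cycle_transfer {M : SimpleGraph A} {N : SimpleGraph B} (f : A → B)
    (hadj : ∀ ⦃a b⦄, M.Adj a b → N.Adj (f a) (f b))
    (hinj : ∀ ⦃a b a' b'⦄, M.Adj a b → M.Adj a' b' →
      s(f a, f b) = s(f a', f b') → s(a, b) = s(a', b'))
    (hcyc : ∃ u, ∃ W : M.Walk u u, W.IsCycle) :
    ∃ u, ∃ W : N.Walk u u, W.IsCycle := by
  obtain ⟨u, W, hW⟩ := hcyc
  obtain ⟨a, b, he⟩ := cycle_first_edge hW
  have hab : M.Adj a b := W.adj_of_mem_edges he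
  obtain ⟨-, hr⟩ := reach_of_cycle_edge hW he
  obtain ⟨p⟩ := hr
  refine exists_cycle_of_adj_reach (hadj hab) ?_
  clear he
  suffices haux : ∀ {x y : A} (p : (M \ SimpleGraph.fromEdgeSet {s(a,b)}).Walk x y),
      (N \ SimpleGraph.fromEdgeSet {s(f a, f b)}).Reachable (f x) (f y) from haux p
  intro x y p
  induction p with
  | nil => exact SimpleGraph.Reachable.refl _
  | cons hadj' q ih =>
    rw [del_adj] at hadj'
    have h1 : (N \ SimpleGraph.fromEdgeSet {s(f a, f b)}).Adj _ _ :=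
      del_adj.2 ⟨hadj hadj'.1, fun hc => hadj'.2 (hinj hadj'.1 hab hc)⟩
    exact h1.reachable.trans ih

lemma reach_lift {M : SimpleGraph A} {P : A → Prop} {N : SimpleGraph {x // P x}}
    (hadj : ∀ ⦃a b⦄, M.Adj a b → ∃ (ha : P a) (hb : P b), N.Adj ⟨a, ha⟩ ⟨b, hb⟩) :
    ∀ {a b : A} (p : M.Walk a b) (ha : P a) (hb : P b), N.Reachable ⟨a, ha⟩ ⟨b, hb⟩ := by
  intro a b p
  induction p with
  | nil => intro ha hb; exact SimpleGraph.Reachable.refl _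
  | cons h q ih =>
    intro ha hb
    obtain ⟨h1, h2, h3⟩ := hadj h
    exact (h3.reachable).trans (ih h2 hb)

lemma cycle_lift {M : SimpleGraph A} {P : A → Prop} {N : SimpleGraph {x // P x}}
    (hadj : ∀ ⦃a b⦄, M.Adj a b → ∃ (ha : P a) (hb : P b), N.Adj ⟨a, ha⟩ ⟨b, hb⟩)
    (hcyc : ∃ u, ∃ W : M.Walk u u, W.IsCycle) :
    ∃ u, ∃ W : N.Walk u u, W.IsCycle := by
  obtain ⟨u, W, hW⟩ := hcyc
  obtain ⟨a, b, he⟩ := cycle_first_edge hW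
  have hab : M.Adj a b := W.adj_of_mem_edges he
  obtain ⟨ha, hb, hN⟩ := hadj hab
  obtain ⟨-, hr⟩ := reach_of_cycle_edge hW he
  obtain ⟨p⟩ := hr
  refine exists_cycle_of_adj_reach hN (reach_lift ?_ p ha hb)
  intro x y hxy
  rw [del_adj] at hxy
  obtain ⟨hx, hy, hN'⟩ := hadj hxy.1
  refine ⟨hx, hy, ?_⟩
  rw [del_adj]
  refine ⟨hN', fun hc => hxy.2 ?_⟩
  have := congrArg (Sym2.map (Subtype.val)) hc
  simpa [Sym2.map_pair_eq] using this

lemma path_two_nbrs {M : SimpleGraph A} {a b z : A} (p : M.Walk a b) (hp : p.IsPath)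
    (hz : z ∈ p.support) (hza : z ≠ a) (hzb : z ≠ b) :
    ∃ u₁ u₂, u₁ ≠ u₂ ∧ s(z, u₁) ∈ p.edges ∧ s(z, u₂) ∈ p.edges := by
  induction p with
  | nil => simp at hz; exact absurd hz hza
  | @cons u c d h q ih =>
    rw [SimpleGraph.Walk.support_cons] at hz
    rcases List.mem_cons.1 hz with h1 | h2
    · exact absurd h1 hza
    · rw [SimpleGraph.Walk.cons_isPath_iff] at hp
      by_cases hzc : z = c
      · subst hzc
        cases q with
        | nil => exact absurd rfl hzb
        | @cons _ d' _ h' q' =>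
          refine ⟨u, d', ?_, ?_, ?_⟩
          · intro heq
            subst heq
            refine hp.2 ?_
            rw [SimpleGraph.Walk.support_cons]
            exact List.mem_cons_of_mem _ q'.start_mem_support
          · rw [SimpleGraph.Walk.edges_cons, Sym2.eq_swap]
            exact List.mem_cons_self
          · rw [SimpleGraph.Walk.edges_cons]
            exact List.mem_cons_of_mem _ (by
              rw [SimpleGraph.Walk.edges_cons]
              exact List.mem_cons_self)
      · obtain ⟨u₁, u₂, h12, e1, e2⟩ := ih hp.1 h2 hzc hzb
        exact ⟨u₁, u₂, h12, by simp [e1], by simp [e2]⟩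

lemma cycle_two_nbrs' {M : SimpleGraph A} {z : A} (W : M.Walk z z) (hW : W.IsCycle) :
    ∃ u₁ u₂, u₁ ≠ u₂ ∧ s(z, u₁) ∈ W.edges ∧ s(z, u₂) ∈ W.edges := by
  cases W with
  | nil => exact absurd hW SimpleGraph.Walk.IsCycle.not_of_nil
  | @cons _ c _ h q =>
    rw [SimpleGraph.Walk.cons_isCycle_iff] at hW
    obtain ⟨d, hd, q'', hq⟩ := SimpleGraph.Walk.exists_eq_cons_of_ne (h.ne) q.reverse
    have hzd : s(z, d) ∈ q.edges := by
      have : s(z, d) ∈ q.reverse.edges := by rw [hq]; simp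
      rwa [SimpleGraph.Walk.edges_reverse, List.mem_reverse] at this
    refine ⟨c, d, ?_, by simp, by simp [hzd]⟩
    intro heq
    subst heq
    exact hW.2 hzd

lemma cycle_two_nbrs {M : SimpleGraph A} {a z : A} (W : M.Walk a a) (hW : W.IsCycle)
    (hz : z ∈ W.support) :
    ∃ u₁ u₂, u₁ ≠ u₂ ∧ s(z, u₁) ∈ W.edges ∧ s(z, u₂) ∈ W.edges := by
  classical
  obtain ⟨u₁, u₂, h12, e1, e2⟩ := cycle_two_nbrs' (W.rotate z hz) (hW.rotate hz)
  have hmem : ∀ e, e ∈ (W.rotate z hz).edges ↔ e ∈ W.edges := fun e =>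
    (W.rotate_edges z hz).mem_iff
  exact ⟨u₁, u₂, h12, (hmem _).1 e1, (hmem _).1 e2⟩

def monoSub (X : SimpleGraph A) (c : Sym2 A → Fin 2) (i : Fin 2) : SimpleGraph A where
  Adj p q := X.Adj p q ∧ c s(p,q) = i
  symm := ⟨fun p q h => ⟨h.1.symm, by rw [Sym2.eq_swap]; exact h.2⟩⟩
  loopless := ⟨fun p h => X.loopless.irrefl p h.1⟩

lemma monoSub_adj {X : SimpleGraph A} {c : Sym2 A → Fin 2} {i : Fin 2} {p q : A} :
    (monoSub X c i).Adj p q ↔ X.Adj p q ∧ c s(p,q) = i := Iff.rfl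

lemma mono_cycle_out {X : SimpleGraph A} {c : Sym2 A → Fin 2} {i : Fin 2}
    (hcyc : ∃ u, ∃ W : (monoSub X c i).Walk u u, W.IsCycle) :
    ∃ u, ∃ W : X.Walk u u, W.IsCycle ∧ ∃ j, ∀ e ∈ W.edges, c e = j := by
  obtain ⟨u, W, hW⟩ := hcyc
  have hle : monoSub X c i ≤ X := fun _ _ h => h.1
  refine ⟨u, W.mapLe hle, hW.mapLe hle, i, ?_⟩
  intro e he
  have he' : e ∈ W.edges := by
    rw [SimpleGraph.Walk.mapLe, SimpleGraph.Walk.edges_map] at he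
    simpa using he
  revert he'
  induction e with
  | _ p q => intro he'; exact (W.adj_of_mem_edges he').2

end Infra


lemma reach_map {A B : Type*} {M : SimpleGraph A} {N : SimpleGraph B} (f : A → B)
    (hadj : ∀ ⦃a b⦄, M.Adj a b → N.Adj (f a) (f b)) {a b : A}
    (hr : M.Reachable a b) : N.Reachable (f a) (f b) := by
  obtain ⟨p⟩ := hr
  induction p with
  | nil => exact SimpleGraph.Reachable.refl _
  | cons h q ih => exact ((hadj h).reachable).trans ih

lemma sym2_inl_inj {V : Type*} {a b a' b' : V} (v₀ : V)
    (h : s(Sum.inl a, Sum.inl b) = s((Sum.inl a' : V ⊕ Fin 2), Sum.inl b')) :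
    s(a, b) = s(a', b') := by
  have := congrArg (Sym2.map (Sum.elim id (fun _ => v₀))) h
  simpa [Sym2.map_pair_eq] using this

section DE
variable {V : Type*} {G : SimpleGraph V} {v w : V}

lemma dE_adj_inl_inl {a b : V} :
    (diamondExtension G v w).Adj (inl a) (inl b) ↔ G.Adj a b ∧ s(a,b) ≠ s(v,w) := by
  rw [diamondExtension, SimpleGraph.fromRel_adj]
  constructor
  · rintro ⟨hne, h | h⟩
    · rcases h with ⟨x, y, hx, hy, ha, hs⟩ | ⟨h1, h2⟩ | ⟨h1, h2⟩ | ⟨h1, h2⟩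
      · rw [Sum.inl.injEq] at hx hy
        subst hx; subst hy
        exact ⟨ha, hs⟩
      · rcases h2 with h2 | h2 <;> exact absurd h2 (by simp)
      · rcases h2 with h2 | h2 <;> exact absurd h2 (by simp)
      · exact absurd h1 (by simp)
    · rcases h with ⟨x, y, hx, hy, ha, hs⟩ | ⟨h1, h2⟩ | ⟨h1, h2⟩ | ⟨h1, h2⟩
      · rw [Sum.inl.injEq] at hx hy
        subst hx; subst hy
        exact ⟨ha.symm, by rwa [Sym2.eq_swap]⟩
      · rcases h2 with h2 | h2 <;> exact absurd h2 (by simp)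
      · rcases h2 with h2 | h2 <;> exact absurd h2 (by simp)
      · exact absurd h1 (by simp)
  · rintro ⟨ha, hs⟩
    exact ⟨by simp [ha.ne], Or.inl (Or.inl ⟨a, b, rfl, rfl, ha, hs⟩)⟩

lemma dE_adj_inl_inr {a : V} {t : Fin 2} :
    (diamondExtension G v w).Adj (inl a) (inr t) ↔ a = v ∨ a = w := by
  rw [diamondExtension, SimpleGraph.fromRel_adj]
  have ht : t = 0 ∨ t = 1 := by omega
  constructor
  · rintro ⟨hne, h | h⟩
    · rcases h with ⟨x, y, hx, hy, ha, hs⟩ | ⟨h1, h2⟩ | ⟨h1, h2⟩ | ⟨h1, h2⟩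
      · exact absurd hy (by simp)
      · exact Or.inl (by simpa using h1)
      · exact Or.inr (by simpa using h1)
      · exact absurd h1 (by simp)
    · rcases h with ⟨x, y, hx, hy, ha, hs⟩ | ⟨h1, h2⟩ | ⟨h1, h2⟩ | ⟨h1, h2⟩
      · exact absurd hx (by simp)
      · exact absurd h1 (by simp)
      · exact absurd h1 (by simp)
      · exact absurd h2 (by simp)
  · rintro (rfl | rfl)
    · refine ⟨by simp, Or.inl (Or.inr (Or.inl ⟨rfl, ?_⟩))⟩
      rcases ht with rfl | rfl <;> simp
    · refine ⟨by simp, Or.inl (Or.inr (Or.inr (Or.inl ⟨rfl, ?_⟩)))⟩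
      rcases ht with rfl | rfl <;> simp

lemma dE_adj_inr_inr {s t : Fin 2} :
    (diamondExtension G v w).Adj (inr s) (inr t) ↔ s ≠ t := by
  rw [diamondExtension, SimpleGraph.fromRel_adj]
  have hs : s = 0 ∨ s = 1 := by omega
  have ht : t = 0 ∨ t = 1 := by omega
  constructor
  · rintro ⟨hne, _⟩ hst
    exact hne (by rw [hst])
  · intro hst
    rcases hs with rfl | rfl <;> rcases ht with rfl | rfl <;> simp_all

end DE


section PartA
open SimpleGraph Sum
variable {V : Type*} {G : SimpleGraph V} {v w : V}

lemma partA (hvw : G.Adj v w) (hG : IsRamseyCyc 2 G) :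
    IsRamseyCyc 2 (diamondExtension G v w) := by
  classical
  intro c
  set X := diamondExtension G v w with hX
  set e1 := c s(inl v, inr 0) with he1
  set e2 := c s(inr 0, inl w) with he2
  set e3 := c s(inl v, inr 1) with he3
  set e4 := c s(inr 1, inl w) with he4
  set e5 := c s(inr 0, inr 1) with he5
  have key := (show ∀ a b c d e : Fin 2,
      (a = e ∧ e = c) ∨ (b = e ∧ e = d) ∨ ∃ i : Fin 2,
        (a = i ∧ b = i) ∨ (c = i ∧ d = i) ∨ (a = i ∧ e = i ∧ d = i) ∨
        (c = i ∧ e = i ∧ b = i) by decide) e1 e2 e3 e4 e5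
  -- adjacency facts in X
  have hxv : X.Adj (inl v) (inr 0) := dE_adj_inl_inr.2 (Or.inl rfl)
  have hyv : X.Adj (inl v) (inr 1) := dE_adj_inl_inr.2 (Or.inl rfl)
  have hxw : X.Adj (inl w) (inr 0) := dE_adj_inl_inr.2 (Or.inr rfl)
  have hyw : X.Adj (inl w) (inr 1) := dE_adj_inl_inr.2 (Or.inr rfl)
  have hxy : X.Adj (inr 0) (inr 1) := dE_adj_inr_inr.2 (by decide)
  rcases key with ⟨h15, h53⟩ | ⟨h25, h54⟩ | ⟨i, hdia⟩
  · -- triangle v x y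
    refine ⟨inl v, .cons hxv (.cons hxy (.cons (hyv.symm) .nil)), ?_, e1, ?_⟩
    · rw [SimpleGraph.Walk.cons_isCycle_iff]
      constructor
      · rw [SimpleGraph.Walk.cons_isPath_iff]
        refine ⟨?_, by simp⟩
        rw [SimpleGraph.Walk.cons_isPath_iff]
        exact ⟨SimpleGraph.Walk.IsPath.nil, by simp⟩
      · simp [Sym2.eq_iff]
    · intro e he
      simp only [SimpleGraph.Walk.edges_cons, SimpleGraph.Walk.edges_nil,
        List.mem_cons, List.not_mem_nil, or_false] at he
      rcases he with rfl | rfl | rfl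
      · rfl
      · rw [← he5, h15]
      · rw [Sym2.eq_swap, ← he3, ← h53, h15]
  · -- triangle w x y
    refine ⟨inl w, .cons hxw (.cons hxy (.cons (hyw.symm) .nil)), ?_, e2, ?_⟩
    · rw [SimpleGraph.Walk.cons_isCycle_iff]
      constructor
      · rw [SimpleGraph.Walk.cons_isPath_iff]
        refine ⟨?_, by simp⟩
        rw [SimpleGraph.Walk.cons_isPath_iff]
        exact ⟨SimpleGraph.Walk.IsPath.nil, by simp⟩
      · simp [Sym2.eq_iff]
    · intro e he
      simp only [SimpleGraph.Walk.edges_cons, SimpleGraph.Walk.edges_nil,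
        List.mem_cons, List.not_mem_nil, or_false] at he
      rcases he with rfl | rfl | rfl
      · rw [Sym2.eq_swap, ← he2]
      · rw [← he5, ← h25]
      · rw [← he4, ← h54, ← h25]
  · -- diamond path of colour i from v to w
    set K' := monoSub X c i with hK'
    -- produce z₁ with edge from inl v and reach to inl w
    have hdia' : ∃ z₁ : V ⊕ Fin 2, (∀ a : V, z₁ ≠ inl a) ∧ K'.Adj (inl v) z₁ ∧
        (K' \ SimpleGraph.fromEdgeSet {s(inl v, z₁)}).Reachable z₁ (inl w) := by
      have hne1 : s(inr 0, inl w) ≠ s((inl v : V ⊕ Fin 2), inr 0) := by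
        simp [Sym2.eq_iff, hvw.ne, hvw.ne']
      have hne2 : s(inr 1, inl w) ≠ s((inl v : V ⊕ Fin 2), inr 1) := by
        simp [Sym2.eq_iff, hvw.ne, hvw.ne']
      have hne3 : s(inr 0, inr 1) ≠ s((inl v : V ⊕ Fin 2), inr 0) := by
        simp [Sym2.eq_iff]
      have hne4 : s(inr 1, inl w) ≠ s((inl v : V ⊕ Fin 2), inr 0) := by
        simp [Sym2.eq_iff]
      have hne5 : s(inr 1, inr 0) ≠ s((inl v : V ⊕ Fin 2), inr 1) := by
        simp [Sym2.eq_iff]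
      have hne6 : s(inr 0, inl w) ≠ s((inl v : V ⊕ Fin 2), inr 1) := by
        simp [Sym2.eq_iff]
      rcases hdia with ⟨hi1, hi2⟩ | ⟨hi3, hi4⟩ | ⟨hi1, hi5, hi4⟩ | ⟨hi3, hi5, hi2⟩
      · refine ⟨inr 0, by simp, monoSub_adj.2 ⟨hxv, hi1⟩, ?_⟩
        exact (SimpleGraph.Adj.reachable (del_adj.2 ⟨monoSub_adj.2 ⟨hxw.symm, by rw [← he2]; exact hi2⟩, hne1⟩))
      · refine ⟨inr 1, by simp, monoSub_adj.2 ⟨hyv, hi3⟩, ?_⟩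
        exact (SimpleGraph.Adj.reachable (del_adj.2 ⟨monoSub_adj.2 ⟨hyw.symm, by rw [← he4]; exact hi4⟩, hne2⟩))
      · refine ⟨inr 0, by simp, monoSub_adj.2 ⟨hxv, hi1⟩, ?_⟩
        refine (SimpleGraph.Adj.reachable (del_adj.2 ⟨monoSub_adj.2 ⟨hxy, by rw [← he5]; exact hi5⟩, hne3⟩)).trans
          (SimpleGraph.Adj.reachable (del_adj.2 ⟨monoSub_adj.2 ⟨hyw.symm, by rw [← he4]; exact hi4⟩, hne4⟩))
      · refine ⟨inr 1, by simp, monoSub_adj.2 ⟨hyv, hi3⟩, ?_⟩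
        refine (SimpleGraph.Adj.reachable (del_adj.2 ⟨monoSub_adj.2 ⟨hxy.symm, by rw [Sym2.eq_swap, ← he5]; exact hi5⟩, hne5⟩)).trans
          (SimpleGraph.Adj.reachable (del_adj.2 ⟨monoSub_adj.2 ⟨hxw.symm, by rw [← he2]; exact hi2⟩, hne6⟩))
    obtain ⟨z₁, hz₁, hadj₁, hrest⟩ := hdia'
    -- colour the contracted edge with i
    set c₂ : Sym2 V → Fin 2 := fun e => if e = s(v, w) then i else c (Sym2.map inl e) with hc₂
    obtain ⟨u, W, hW, iG, hmono⟩ := hG c₂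
    by_cases hmem : s(v, w) ∈ W.edges
    · -- the cycle uses vw; splice in the diamond path
      have hiG : iG = i := by
        have := hmono _ hmem
        rw [hc₂] at this
        simp only [if_pos rfl] at this
        exact this.symm
      subst hiG
      set MG := monoSub G c₂ iG with hMG
      have hWedges : ∀ e ∈ W.edges, e ∈ MG.edgeSet := by
        intro e he
        induction e with
        | _ p q => exact ⟨W.adj_of_mem_edges he, hmono _ he⟩
      have hW' := hW.transfer hWedges
      obtain ⟨-, hr⟩ := reach_of_cycle_edge hW' (by rw [W.edges_transfer hWedges]; exact hmem)
      -- map the v-w path (avoiding vw) into K' minus the first diamond edge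
      have hmap : (K' \ SimpleGraph.fromEdgeSet {s(inl v, z₁)}).Reachable (inl v) (inl w) := by
        refine reach_map inl ?_ hr
        intro a b hab
        rw [del_adj] at hab ⊢
        obtain ⟨⟨hab1, hab2⟩, hab3⟩ := hab
        refine ⟨⟨dE_adj_inl_inl.2 ⟨hab1, hab3⟩, ?_⟩, ?_⟩
        · rw [hc₂] at hab2
          simp only [if_neg hab3, Sym2.map_pair_eq] at hab2
          exact hab2
        · intro hc
          rcases Sym2.eq_iff.1 hc with ⟨h1, h2⟩ | ⟨h1, h2⟩
          · exact hz₁ b h2.symm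
          · exact hz₁ a h1.symm
      have : (K' \ SimpleGraph.fromEdgeSet {s(inl v, z₁)}).Reachable (inl v) z₁ :=
        hmap.trans hrest.symm
      exact mono_cycle_out (exists_cycle_of_adj_reach hadj₁ this)
    · -- the cycle avoids vw; it maps straight into X
      set MG := monoSub G c₂ iG with hMG
      have hWedges : ∀ e ∈ W.edges, e ∈ (MG \ SimpleGraph.fromEdgeSet {s(v, w)}).edgeSet := by
        intro e he
        induction e with
        | _ p q =>
          refine del_adj.2 ⟨⟨W.adj_of_mem_edges he, hmono _ he⟩, ?_⟩
          intro hc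
          rw [hc] at he
          exact hmem he
      have hW' := hW.transfer hWedges
      refine mono_cycle_out (cycle_transfer (M := MG \ SimpleGraph.fromEdgeSet {s(v, w)})
        (N := monoSub X c iG) inl ?_ ?_ ⟨u, _, hW'⟩)
      · intro a b hab
        rw [del_adj] at hab
        obtain ⟨⟨hab1, hab2⟩, hab3⟩ := hab
        refine ⟨dE_adj_inl_inl.2 ⟨hab1, hab3⟩, ?_⟩
        rw [hc₂] at hab2
        simp only [if_neg hab3, Sym2.map_pair_eq] at hab2
        exact hab2
      · intro a b a' b' _ _ hs
        exact sym2_inl_inj v hs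
end PartA


section PartBHelpers
variable {A : Type*}

lemma avoid_deg1 {K : SimpleGraph A} {z z₀ : A}
    (hz : ∀ q, K.Adj z q → q = z₀) {u : A} {W : K.Walk u u} (hW : W.IsCycle) :
    z ∉ W.support := by
  intro hmem
  obtain ⟨u₁, u₂, h12, e1, e2⟩ := cycle_two_nbrs W hW hmem
  exact h12 ((hz u₁ (W.adj_of_mem_edges e1)).trans (hz u₂ (W.adj_of_mem_edges e2)).symm)

lemma avoid_deg2 {K : SimpleGraph A} {z x z₀ : A}
    (hz : ∀ q, K.Adj z q → q = x ∨ q = z₀) {u : A} {W : K.Walk u u} (hW : W.IsCycle)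
    (hx : x ∉ W.support) : z ∉ W.support := by
  intro hmem
  obtain ⟨u₁, u₂, h12, e1, e2⟩ := cycle_two_nbrs W hW hmem
  rcases hz u₁ (W.adj_of_mem_edges e1) with rfl | rfl
  · exact hx (W.snd_mem_support_of_mem_edges e1)
  · rcases hz u₂ (W.adj_of_mem_edges e2) with rfl | rfl
    · exact hx (W.snd_mem_support_of_mem_edges e2)
    · exact h12 rfl

def subMono {X : SimpleGraph A} (Hs : X.Subgraph) (c : Sym2 A → Fin 2) (k : Fin 2) :
    SimpleGraph A where
  Adj p q := Hs.Adj p q ∧ c s(p,q) = k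
  symm := ⟨fun p q h => ⟨h.1.symm, by rw [Sym2.eq_swap]; exact h.2⟩⟩
  loopless := ⟨fun p h => (Hs.adj_sub h.1).ne rfl⟩

lemma subMono_adj {X : SimpleGraph A} {Hs : X.Subgraph} {c : Sym2 A → Fin 2} {k : Fin 2}
    {p q : A} : (subMono Hs c k).Adj p q ↔ Hs.Adj p q ∧ c s(p,q) = k := Iff.rfl

lemma coe_mono_cycle_up {X : SimpleGraph A} {Hs : X.Subgraph} {c : Sym2 A → Fin 2} {k : Fin 2}
    {α : ↑Hs.verts} {W : Hs.coe.Walk α α} (hW : W.IsCycle)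
    (hmono : ∀ e ∈ W.edges, c (Sym2.map Subtype.val e) = k) :
    ∃ u, ∃ W' : (subMono Hs c k).Walk u u, W'.IsCycle := by
  have hedges : ∀ e ∈ W.edges,
      e ∈ (monoSub Hs.coe (fun e => c (Sym2.map Subtype.val e)) k).edgeSet := by
    intro e he
    induction e with
    | _ p q => exact ⟨W.adj_of_mem_edges he, hmono _ he⟩
  refine cycle_transfer Subtype.val ?_ ?_ ⟨α, W.transfer _ hedges, hW.transfer hedges⟩
  · rintro ⟨p, hp⟩ ⟨q, hq⟩ h
    obtain ⟨h1, h2⟩ := monoSub_adj.1 h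
    refine subMono_adj.2 ⟨h1, ?_⟩
    rw [← Sym2.map_pair_eq Subtype.val]
    exact h2
  · intro α β α' β' _ _ hs
    rcases Sym2.eq_iff.1 hs with ⟨h1, h2⟩ | ⟨h1, h2⟩
    · rw [Subtype.ext h1, Subtype.ext h2]
    · rw [Subtype.ext h1, Subtype.ext h2, Sym2.eq_swap]

end PartBHelpers

section PartBHelpers2
open Sum
variable {V : Type*}

lemma no_inl_cycle {G : SimpleGraph V} {H : G.Subgraph} {k : Fin 2}
    {c₀ : Sym2 ↑H.verts → Fin 2} {K : SimpleGraph (V ⊕ Fin 2)} (v₀ : V)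
    (hKH : ∀ a b : V, K.Adj (inl a) (inl b) → ∃ (ha : a ∈ H.verts) (hb : b ∈ H.verts),
      H.Adj a b ∧ c₀ s(⟨a, ha⟩, ⟨b, hb⟩) = k)
    (hc₀ : ¬∃ (α : ↑H.verts) (W : H.coe.Walk α α), W.IsCycle ∧
      ∃ j : Fin 2, ∀ e ∈ W.edges, c₀ e = j)
    {u : V ⊕ Fin 2} {W : K.Walk u u} (hW : W.IsCycle)
    (hsup : ∀ p ∈ W.support, p ≠ inr 0 ∧ p ≠ inr 1) : False := by
  classical
  set M' : SimpleGraph (V ⊕ Fin 2) :=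
    { Adj := fun p q => K.Adj p q ∧ (∃ a, p = inl a) ∧ (∃ b, q = inl b)
      symm := ⟨fun p q h => ⟨h.1.symm, h.2.2, h.2.1⟩⟩
      loopless := ⟨fun p h => K.loopless.irrefl p h.1⟩ } with hM'
  have hM'adj : ∀ p q, M'.Adj p q ↔ K.Adj p q ∧ (∃ a, p = inl a) ∧ (∃ b, q = inl b) :=
    fun p q => by rw [hM']
  set KV : SimpleGraph V :=
    { Adj := fun a b => K.Adj (inl a) (inl b)
      symm := ⟨fun a b h => h.symm⟩
      loopless := ⟨fun a h => K.loopless.irrefl _ h⟩ } with hKV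
  have hKVadj : ∀ a b, KV.Adj a b ↔ K.Adj (inl a) (inl b) := fun a b => by rw [hKV]
  have hsup' : ∀ p ∈ W.support, ∃ a, p = inl a := by
    intro p hp
    obtain ⟨h0, h1⟩ := hsup p hp
    cases p with
    | inl a => exact ⟨a, rfl⟩
    | inr t =>
      have ht : t = 0 ∨ t = 1 := by omega
      rcases ht with rfl | rfl
      · exact absurd rfl h0
      · exact absurd rfl h1
  have hedges : ∀ e ∈ W.edges, e ∈ M'.edgeSet := by
    intro e he
    induction e with
    | _ p q =>
      rw [SimpleGraph.mem_edgeSet, hM']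
      exact ⟨W.adj_of_mem_edges he, hsup' p (W.fst_mem_support_of_mem_edges he),
        hsup' q (W.snd_mem_support_of_mem_edges he)⟩
  have hKVcyc : ∃ u, ∃ W : KV.Walk u u, W.IsCycle := by
    refine cycle_transfer (M := M') (Sum.elim id fun _ => v₀) ?_ ?_
      ⟨u, W.transfer M' hedges, hW.transfer hedges⟩
    · intro p q hpq
      obtain ⟨hK, ⟨a, rfl⟩, ⟨b, rfl⟩⟩ := (hM'adj _ _).1 hpq
      exact (hKVadj a b).2 hK
    · intro p q p' q' h1 h2 hs
      obtain ⟨hK, ⟨a, rfl⟩, ⟨b, rfl⟩⟩ := (hM'adj _ _).1 h1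
      obtain ⟨hK', ⟨a', rfl⟩, ⟨b', rfl⟩⟩ := (hM'adj _ _).1 h2
      simp only [Sum.elim_inl, id] at hs
      simpa [Sym2.map_pair_eq] using congrArg (Sym2.map (inl : V → V ⊕ Fin 2)) hs
  refine hc₀ (mono_cycle_out (i := k) (cycle_lift (N := monoSub H.coe c₀ k) ?_ hKVcyc))
  intro a b hab
  obtain ⟨ha, hb, hH1, hH2⟩ := hKH a b ((hKVadj a b).1 hab)
  exact ⟨ha, hb, monoSub_adj.2 ⟨hH1, hH2⟩⟩

lemma dE_nbr0 {G : SimpleGraph V} {v w : V} {z : V ⊕ Fin 2}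
    (h : (diamondExtension G v w).Adj (inr 0) z) : z = inl v ∨ z = inl w ∨ z = inr 1 := by
  cases z with
  | inl a =>
    rcases dE_adj_inl_inr.1 h.symm with rfl | rfl
    · exact Or.inl rfl
    · exact Or.inr (Or.inl rfl)
  | inr t =>
    have h0 := dE_adj_inr_inr.1 h
    have : t = 1 := by omega
    subst this
    exact Or.inr (Or.inr rfl)

lemma dE_nbr1 {G : SimpleGraph V} {v w : V} {z : V ⊕ Fin 2}
    (h : (diamondExtension G v w).Adj (inr 1) z) : z = inl v ∨ z = inl w ∨ z = inr 0 := by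
  cases z with
  | inl a =>
    rcases dE_adj_inl_inr.1 h.symm with rfl | rfl
    · exact Or.inl rfl
    · exact Or.inr (Or.inl rfl)
  | inr t =>
    have h0 := dE_adj_inr_inr.1 h
    have : t = 0 := by omega
    subst this
    exact Or.inr (Or.inr rfl)

def ddFun [DecidableEq V] (v w : V) (cv0 cv1 cw0 cw1 : Fin 2) : V → Fin 2 → Fin 2 :=
  fun a t =>
    if a = v then (if t = 0 then cv0 else cv1)
    else if a = w then (if t = 0 then cw0 else cw1) else 0

def hatc [DecidableEq V] (v w : V) (gg : V → V → Fin 2) (hgg : ∀ a b, gg a b = gg b a)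
    (cv0 cv1 cw0 cw1 cxy : Fin 2) : Sym2 (V ⊕ Fin 2) → Fin 2 :=
  Sym2.lift ⟨fun p q =>
    match p, q with
    | inl a, inl b => gg a b
    | inl a, inr t => ddFun v w cv0 cv1 cw0 cw1 a t
    | inr t, inl a => ddFun v w cv0 cv1 cw0 cw1 a t
    | inr _, inr _ => cxy,
    by
      rintro (a | t) (b | s)
      · exact hgg a b
      · rfl
      · rfl
      · rfl⟩

section hatcEval
variable [DecidableEq V] {v w : V} {gg : V → V → Fin 2} {hgg : ∀ a b, gg a b = gg b a}
  {cv0 cv1 cw0 cw1 cxy : Fin 2}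

lemma hatc_ll {a b : V} : hatc v w gg hgg cv0 cv1 cw0 cw1 cxy s(inl a, inl b) = gg a b := rfl

lemma hatc_vx : hatc v w gg hgg cv0 cv1 cw0 cw1 cxy s(inl v, inr 0) = cv0 := by
  show ddFun v w cv0 cv1 cw0 cw1 v 0 = cv0
  simp [ddFun]

lemma hatc_vy : hatc v w gg hgg cv0 cv1 cw0 cw1 cxy s(inl v, inr 1) = cv1 := by
  show ddFun v w cv0 cv1 cw0 cw1 v 1 = cv1
  simp [ddFun]

lemma hatc_wx (hne : w ≠ v) :
    hatc v w gg hgg cv0 cv1 cw0 cw1 cxy s(inl w, inr 0) = cw0 := by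
  show ddFun v w cv0 cv1 cw0 cw1 w 0 = cw0
  simp [ddFun, hne]

lemma hatc_wy (hne : w ≠ v) :
    hatc v w gg hgg cv0 cv1 cw0 cw1 cxy s(inl w, inr 1) = cw1 := by
  show ddFun v w cv0 cv1 cw0 cw1 w 1 = cw1
  simp [ddFun, hne]

lemma hatc_xy {t s : Fin 2} :
    hatc v w gg hgg cv0 cv1 cw0 cw1 cxy s(inr t, inr s) = cxy := rfl

lemma hatc_xv : hatc v w gg hgg cv0 cv1 cw0 cw1 cxy s(inr 0, inl v) = cv0 := by
  rw [Sym2.eq_swap]; exact hatc_vx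

lemma hatc_yv : hatc v w gg hgg cv0 cv1 cw0 cw1 cxy s(inr 1, inl v) = cv1 := by
  rw [Sym2.eq_swap]; exact hatc_vy

lemma hatc_xw (hne : w ≠ v) :
    hatc v w gg hgg cv0 cv1 cw0 cw1 cxy s(inr 0, inl w) = cw0 := by
  rw [Sym2.eq_swap]; exact hatc_wx hne

lemma hatc_yw (hne : w ≠ v) :
    hatc v w gg hgg cv0 cv1 cw0 cw1 cxy s(inr 1, inl w) = cw1 := by
  rw [Sym2.eq_swap]; exact hatc_wy hne

end hatcEval
end PartBHelpers2


section PartBMain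
open Sum
variable {V : Type*} {G : SimpleGraph V} {v w : V}

/-- The contraction of a subgraph of the diamond extension back to `G`. -/
def contrSub (G : SimpleGraph V) (v w : V) (hvw : G.Adj v w)
    (Hs : (diamondExtension G v w).Subgraph) : G.Subgraph where
  verts := {a : V | inl a ∈ Hs.verts}
  Adj a b := Hs.Adj (inl a) (inl b) ∨
    (s(a, b) = s(v, w) ∧ inl v ∈ Hs.verts ∧ inl w ∈ Hs.verts)
  adj_sub := by
    rintro a b (hab | ⟨hs, -, -⟩)
    · exact (dE_adj_inl_inl.1 (Hs.adj_sub hab)).1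
    · rcases Sym2.eq_iff.1 hs with ⟨rfl, rfl⟩ | ⟨rfl, rfl⟩
      · exact hvw
      · exact hvw.symm
  edge_vert := by
    rintro a b (hab | ⟨hs, hv, hw⟩)
    · exact Hs.edge_vert hab
    · rcases Sym2.eq_iff.1 hs with ⟨rfl, rfl⟩ | ⟨rfl, rfl⟩
      · exact hv
      · exact hw
  symm := by
    constructor
    rintro a b (hab | ⟨hs, hv, hw⟩)
    · exact Or.inl hab.symm
    · exact Or.inr ⟨by rw [Sym2.eq_swap]; exact hs, hv, hw⟩

lemma contrSub_adj {hvw : G.Adj v w} {Hs : (diamondExtension G v w).Subgraph} {a b : V} :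
    (contrSub G v w hvw Hs).Adj a b ↔ (Hs.Adj (inl a) (inl b) ∨
      (s(a, b) = s(v, w) ∧ inl v ∈ Hs.verts ∧ inl w ∈ Hs.verts)) := Iff.rfl

lemma contrSub_verts {hvw : G.Adj v w} {Hs : (diamondExtension G v w).Subgraph} {a : V} :
    a ∈ (contrSub G v w hvw Hs).verts ↔ inl a ∈ Hs.verts := Iff.rfl

/-- The subgraph of `G` obtained by deleting the edge `vw`. -/
def delVW (G : SimpleGraph V) (v w : V) : G.Subgraph where
  verts := Set.univ
  Adj a b := G.Adj a b ∧ s(a, b) ≠ s(v, w)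
  adj_sub := fun h => h.1
  edge_vert := fun _ => Set.mem_univ _
  symm := ⟨fun a b h => ⟨h.1.symm, by rw [Sym2.eq_swap]; exact h.2⟩⟩

lemma delVW_adj {a b : V} : (delVW G v w).Adj a b ↔ G.Adj a b ∧ s(a, b) ≠ s(v, w) := Iff.rfl

lemma delVW_mem {a : V} : a ∈ (delVW G v w).verts := Set.mem_univ _

lemma partB (hvw : G.Adj v w)
    (h2 : ∀ H : G.Subgraph, H ≠ ⊤ → ¬ IsRamseyCyc 2 H.coe)
    (Hs : (diamondExtension G v w).Subgraph) (hne : Hs ≠ ⊤) : ¬ IsRamseyCyc 2 Hs.coe := by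
  classical
  intro hram
  by_cases hA : (∀ a : V, inl a ∈ Hs.verts) ∧
      (∀ a b : V, (diamondExtension G v w).Adj (inl a) (inl b) → Hs.Adj (inl a) (inl b))
  case neg =>
    -- CASE A : something from the original graph is missing
    set H : G.Subgraph := contrSub G v w hvw Hs with hHdef
    have hHne : H ≠ ⊤ := by
      intro heq
      rw [not_and_or] at hA
      rcases hA with hA | hA
      · push_neg at hA
        obtain ⟨a, ha⟩ := hA
        apply ha
        rw [← contrSub_verts (hvw := hvw), ← hHdef, heq]
        exact Set.mem_univ a
      · push_neg at hA
        obtain ⟨a, b, hab, hnadj⟩ := hA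
        have hGadj := dE_adj_inl_inl.1 hab
        have hH : H.Adj a b := by
          rw [heq]
          exact SimpleGraph.Subgraph.top_adj.2 hGadj.1
        rw [hHdef] at hH
        rcases contrSub_adj.1 hH with h1 | ⟨hs, -, -⟩
        · exact hnadj h1
        · exact hGadj.2 hs
    have hH := h2 H hHne
    rw [IsRamseyCyc] at hH
    obtain ⟨c₀, hc₀⟩ := not_forall.1 hH
    set i : Fin 2 :=
      if hm : v ∈ H.verts ∧ w ∈ H.verts then c₀ s(⟨v, hm.1⟩, ⟨w, hm.2⟩) else 0 with hidef
    set gg : V → V → Fin 2 := fun a b =>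
      if hm : a ∈ H.verts ∧ b ∈ H.verts then c₀ s(⟨a, hm.1⟩, ⟨b, hm.2⟩) else 0 with hggdef
    have hggsymm : ∀ a b, gg a b = gg b a := by
      intro a b
      simp only [hggdef]
      by_cases hm : a ∈ H.verts ∧ b ∈ H.verts
      · rw [dif_pos hm, dif_pos (And.intro hm.2 hm.1)]
        congr 1
        exact Sym2.eq_swap
      · rw [dif_neg hm, dif_neg fun hm2 => hm ⟨hm2.2, hm2.1⟩]
    set chat : Sym2 (V ⊕ Fin 2) → Fin 2 := hatc v w gg hggsymm i i i (i+1) (i+1) with hchatdef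
    obtain ⟨α, Wc, hWc, k, hmono⟩ := hram (fun e => chat (Sym2.map Subtype.val e))
    set K := subMono Hs chat k with hKdef
    obtain ⟨u0, W0, hW0⟩ : ∃ u, ∃ W : K.Walk u u, W.IsCycle :=
      coe_mono_cycle_up hWc hmono
    have KadjI : ∀ p q, K.Adj p q ↔ Hs.Adj p q ∧ chat s(p, q) = k := fun p q => Iff.rfl
    have hii : i ≠ i + 1 := (show ∀ a : Fin 2, a ≠ a + 1 by decide) i
    have hKH : ∀ a b : V, K.Adj (inl a) (inl b) → ∃ (ha : a ∈ H.verts) (hb : b ∈ H.verts),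
        H.Adj a b ∧ c₀ s(⟨a, ha⟩, ⟨b, hb⟩) = k := by
      intro a b hab
      obtain ⟨h1, h2⟩ := (KadjI _ _).1 hab
      have ha : a ∈ H.verts := contrSub_verts.2 (Hs.edge_vert h1)
      have hb : b ∈ H.verts := contrSub_verts.2 (Hs.edge_vert h1.symm)
      refine ⟨ha, hb, contrSub_adj.2 (Or.inl h1), ?_⟩
      rw [hchatdef, hatc_ll] at h2
      simp only [hggdef] at h2
      rw [dif_pos ⟨ha, hb⟩] at h2
      exact h2
    have hnbr0 : ∀ z, K.Adj (inr 0) z →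
        (z = inl v ∧ K.Adj (inr 0) (inl v) ∧ i = k) ∨
        (z = inl w ∧ K.Adj (inr 0) (inl w) ∧ i = k) ∨
        (z = inr 1 ∧ i + 1 = k) := by
      intro z hz
      obtain ⟨h1, h2⟩ := (KadjI _ _).1 hz
      rcases dE_nbr0 (Hs.adj_sub h1) with rfl | rfl | rfl
      · rw [hchatdef, hatc_xv] at h2
        exact Or.inl ⟨rfl, hz, h2⟩
      · rw [hchatdef, hatc_xw hvw.ne'] at h2
        exact Or.inr (Or.inl ⟨rfl, hz, h2⟩)
      · rw [hchatdef, hatc_xy] at h2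
        exact Or.inr (Or.inr ⟨rfl, h2⟩)
    have hnbr1 : ∀ z, K.Adj (inr 1) z →
        (z = inl v ∧ i = k) ∨ (z = inl w ∧ i + 1 = k) ∨ (z = inr 0 ∧ i + 1 = k) := by
      intro z hz
      obtain ⟨h1, h2⟩ := (KadjI _ _).1 hz
      rcases dE_nbr1 (Hs.adj_sub h1) with rfl | rfl | rfl
      · rw [hchatdef, hatc_yv] at h2
        exact Or.inl ⟨rfl, h2⟩
      · rw [hchatdef, hatc_yw hvw.ne'] at h2
        exact Or.inr (Or.inl ⟨rfl, h2⟩)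
      · rw [hchatdef, hatc_xy] at h2
        exact Or.inr (Or.inr ⟨rfl, h2⟩)
    have hk : k = i ∨ k = i + 1 := (show ∀ a b : Fin 2, a = b ∨ a = b + 1 by decide) k i
    rcases hk with hki | hkj
    · -- k = i : the cycle may use the vertex x = inr 0
      subst hki
      have havy : ∀ z, K.Adj (inr 1) z → z = inl v := by
        intro z hz
        rcases hnbr1 z hz with ⟨rfl, -⟩ | ⟨rfl, hcol⟩ | ⟨rfl, hcol⟩
        · rfl
        · exact absurd hcol.symm hii
        · exact absurd hcol.symm hii
      have hy := avoid_deg1 havy hW0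
      rcases Classical.em ((inr 0 : V ⊕ Fin 2) ∈ W0.support) with hxs | hxs
      · -- splice the diamond path back to the edge vw
        obtain ⟨u₁, u₂, h12, e1, e2⟩ := cycle_two_nbrs W0 hW0 hxs
        have hcl : ∀ z, K.Adj (inr 0) z → z = inl v ∨ z = inl w := by
          intro z hz
          rcases hnbr0 z hz with ⟨rfl, -, -⟩ | ⟨rfl, -, -⟩ | ⟨rfl, hcol⟩
          · exact Or.inl rfl
          · exact Or.inr rfl
          · exact absurd hcol.symm hii
        have hboth : s(inr 0, inl v) ∈ W0.edges ∧ K.Adj (inr 0) (inl w) := by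
          rcases hcl u₁ (W0.adj_of_mem_edges e1) with rfl | rfl <;>
            rcases hcl u₂ (W0.adj_of_mem_edges e2) with rfl | rfl
          · exact absurd rfl h12
          · exact ⟨e1, W0.adj_of_mem_edges e2⟩
          · exact ⟨e2, W0.adj_of_mem_edges e1⟩
          · exact absurd rfl h12
        obtain ⟨hvxedge, hKxw⟩ := hboth
        have hKxv : K.Adj (inr 0) (inl v) := W0.adj_of_mem_edges hvxedge
        obtain ⟨-, hreach⟩ := reach_of_cycle_edge hW0 hvxedge
        obtain ⟨p0⟩ := hreach
        obtain ⟨b1, hb1, q, hq⟩ :=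
          SimpleGraph.Walk.exists_eq_cons_of_ne (by simp) (p0.toPath :
            (K \ SimpleGraph.fromEdgeSet {s(inr 0, inl v)}).Walk (inr 0) (inl v))
        have hppath : ((p0.toPath :
            (K \ SimpleGraph.fromEdgeSet {s(inr 0, inl v)}).Walk (inr 0) (inl v))).IsPath :=
          p0.toPath.2
        rw [hq, SimpleGraph.Walk.cons_isPath_iff] at hppath
        obtain ⟨hqpath, hxnot⟩ := hppath
        have hb1' := del_adj.1 hb1
        have hb1w : b1 = inl w := by
          rcases hcl b1 hb1'.1 with rfl | rfl
          · exact (hb1'.2 rfl).elim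
          · rfl
        subst hb1w
        have hqy : inr 1 ∉ q.support := by
          intro hmem
          obtain ⟨u₁', u₂', h12', e1', e2'⟩ := path_two_nbrs q hqpath hmem (by simp) (by simp)
          have k1 := havy u₁' (del_adj.1 (q.adj_of_mem_edges e1')).1
          have k2 := havy u₂' (del_adj.1 (q.adj_of_mem_edges e2')).1
          exact h12' (k1.trans k2.symm)
        have hqsup : ∀ p' ∈ q.support, ∃ a, p' = inl a := by
          intro p' hp'
          cases p' with
          | inl a => exact ⟨a, rfl⟩
          | inr t =>
            have ht : t = 0 ∨ t = 1 := by omega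
            rcases ht with rfl | rfl
            · exact absurd hp' hxnot
            · exact absurd hp' hqy
        set HiV : SimpleGraph V :=
          { Adj := fun a b => K.Adj (inl a) (inl b) ∨
              (s(a, b) = s(v, w) ∧ K.Adj (inr 0) (inl v) ∧ K.Adj (inr 0) (inl w))
            symm := by
              constructor
              rintro a b (h1 | ⟨hs, h3, h4⟩)
              · exact Or.inl h1.symm
              · exact Or.inr ⟨by rw [Sym2.eq_swap]; exact hs, h3, h4⟩
            loopless := by
              constructor
              rintro a (h1 | ⟨hs, -, -⟩)
              · exact K.loopless.irrefl _ h1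
              · rcases Sym2.eq_iff.1 hs with ⟨rfl, rfl⟩ | ⟨rfl, rfl⟩ <;> exact hvw.ne rfl } with hHiVdef
        have HiVAdj : ∀ a b, HiV.Adj a b ↔ (K.Adj (inl a) (inl b) ∨
            (s(a, b) = s(v, w) ∧ K.Adj (inr 0) (inl v) ∧ K.Adj (inr 0) (inl w))) :=
          fun a b => by rw [hHiVdef]
        have hKne : ∀ a b : V, K.Adj (inl a) (inl b) → s(a, b) ≠ s(v, w) := by
          intro a b hab
          exact (dE_adj_inl_inl.1 (Hs.adj_sub ((KadjI _ _).1 hab).1)).2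
        set M' : SimpleGraph (V ⊕ Fin 2) :=
          { Adj := fun p' q' => K.Adj p' q' ∧ (∃ a, p' = inl a) ∧ (∃ b, q' = inl b)
            symm := ⟨fun p' q' h => ⟨h.1.symm, h.2.2, h.2.1⟩⟩
            loopless := ⟨fun p' h => K.loopless.irrefl p' h.1⟩ } with hM'def
        have hM'adj : ∀ p' q', M'.Adj p' q' ↔
            K.Adj p' q' ∧ (∃ a, p' = inl a) ∧ (∃ b, q' = inl b) := fun p' q' => by rw [hM'def]
        have hqedges : ∀ e ∈ q.edges, e ∈ M'.edgeSet := by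
          intro e he
          induction e with
          | _ p' q' =>
            rw [SimpleGraph.mem_edgeSet]
            refine (hM'adj _ _).2 ⟨(del_adj.1 (q.adj_of_mem_edges he)).1,
              hqsup _ (q.fst_mem_support_of_mem_edges he),
              hqsup _ (q.snd_mem_support_of_mem_edges he)⟩
        have hreach2 : (HiV \ SimpleGraph.fromEdgeSet {s(v, w)}).Reachable w v := by
          exact reach_map (M := M') (Sum.elim id fun _ => v)
            (by
              intro p' q' hpq
              obtain ⟨hK', ⟨a, rfl⟩, ⟨b, rfl⟩⟩ := (hM'adj _ _).1 hpq
              simp only [Sum.elim_inl, id]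
              exact del_adj.2 ⟨(HiVAdj a b).2 (Or.inl hK'), hKne a b hK'⟩)
            (q.transfer M' hqedges).reachable
        have hHiVvw : HiV.Adj v w := (HiVAdj v w).2 (Or.inr ⟨rfl, hKxv, hKxw⟩)
        have hHiVcyc := exists_cycle_of_adj_reach hHiVvw hreach2.symm
        refine hc₀ (mono_cycle_out (i := i) (cycle_lift (N := monoSub H.coe c₀ i) ?_ hHiVcyc))
        intro a b hab
        rcases (HiVAdj a b).1 hab with h1 | ⟨hs, h3, h4⟩
        · obtain ⟨ha, hb, hH1, hH2⟩ := hKH a b h1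
          exact ⟨ha, hb, monoSub_adj.2 ⟨hH1, hH2⟩⟩
        · have hvmem : v ∈ H.verts := contrSub_verts.2 (Hs.edge_vert ((KadjI _ _).1 h3).1.symm)
          have hwmem : w ∈ H.verts := contrSub_verts.2 (Hs.edge_vert ((KadjI _ _).1 h4).1.symm)
          have hc0vw : c₀ s(⟨v, hvmem⟩, ⟨w, hwmem⟩) = i := by
            rw [hidef, dif_pos ⟨hvmem, hwmem⟩]
          have hHvw : H.Adj v w :=
            contrSub_adj.2 (Or.inr ⟨rfl, Hs.edge_vert ((KadjI _ _).1 h3).1.symm,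
              Hs.edge_vert ((KadjI _ _).1 h4).1.symm⟩)
          rcases Sym2.eq_iff.1 hs with ⟨rfl, rfl⟩ | ⟨rfl, rfl⟩
          · exact ⟨hvmem, hwmem, monoSub_adj.2 ⟨hHvw, hc0vw⟩⟩
          · refine ⟨hwmem, hvmem, monoSub_adj.2 ⟨hHvw.symm, ?_⟩⟩
            rw [Sym2.eq_swap]
            exact hc0vw
      · -- the cycle avoids both new vertices
        exact no_inl_cycle v hKH hc₀ hW0 (fun p hp =>
          ⟨fun hh => hxs (hh ▸ hp), fun hh => hy (hh ▸ hp)⟩)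
    · -- k = i + 1 : the cycle avoids both new vertices
      subst hkj
      have havx : ∀ z, K.Adj (inr 0) z → z = inr 1 := by
        intro z hz
        rcases hnbr0 z hz with ⟨rfl, -, hcol⟩ | ⟨rfl, -, hcol⟩ | ⟨rfl, -⟩
        · exact absurd hcol hii
        · exact absurd hcol hii
        · rfl
      have hx := avoid_deg1 havx hW0
      have havy : ∀ z, K.Adj (inr 1) z → z = inr 0 ∨ z = inl w := by
        intro z hz
        rcases hnbr1 z hz with ⟨rfl, hcol⟩ | ⟨rfl, -⟩ | ⟨rfl, -⟩
        · exact absurd hcol hii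
        · exact Or.inr rfl
        · exact Or.inl rfl
      have hy := avoid_deg2 havy hW0 hx
      exact no_inl_cycle v hKH hc₀ hW0 (fun p hp =>
        ⟨fun hh => hx (hh ▸ hp), fun hh => hy (hh ▸ hp)⟩)
  case pos =>
    -- CASE B : the original graph part is intact, so part of the diamond is missing
    have habs : ¬Hs.Adj (inl v) (inr 0) ∨ ¬Hs.Adj (inl w) (inr 0) ∨ ¬Hs.Adj (inl v) (inr 1) ∨
        ¬Hs.Adj (inl w) (inr 1) ∨ ¬Hs.Adj (inr 0) (inr 1) := by
      by_contra hall
      push_neg at hall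
      obtain ⟨hvx, hwx, hvy, hwy, hxy⟩ := hall
      apply hne
      apply SimpleGraph.Subgraph.ext
      · rw [SimpleGraph.Subgraph.verts_top]
        apply Set.eq_univ_of_forall
        intro p
        cases p with
        | inl a => exact hA.1 a
        | inr t =>
          have ht : t = 0 ∨ t = 1 := by omega
          rcases ht with rfl | rfl
          · exact Hs.edge_vert hvx.symm
          · exact Hs.edge_vert hvy.symm
      · funext p q
        apply propext
        constructor
        · intro hpq
          exact SimpleGraph.Subgraph.top_adj.2 (Hs.adj_sub hpq)
        · intro hpq
          have hX := SimpleGraph.Subgraph.top_adj.1 hpq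
          cases p with
          | inl a =>
            cases q with
            | inl b => exact hA.2 a b hX
            | inr t =>
              have ht : t = 0 ∨ t = 1 := by omega
              rcases dE_adj_inl_inr.1 hX with rfl | rfl
              · rcases ht with rfl | rfl
                · exact hvx
                · exact hvy
              · rcases ht with rfl | rfl
                · exact hwx
                · exact hwy
          | inr t =>
            cases q with
            | inl a =>
              have ht : t = 0 ∨ t = 1 := by omega
              rcases dE_adj_inl_inr.1 hX.symm with rfl | rfl
              · rcases ht with rfl | rfl
                · exact hvx.symm
                · exact hvy.symm
              · rcases ht with rfl | rfl
                · exact hwx.symm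
                · exact hwy.symm
            | inr s' =>
              have hst := dE_adj_inr_inr.1 hX
              have hts : (t = 0 ∧ s' = 1) ∨ (t = 1 ∧ s' = 0) := by omega
              rcases hts with ⟨rfl, rfl⟩ | ⟨rfl, rfl⟩
              · exact hxy
              · exact hxy.symm
    have hHneB : delVW G v w ≠ ⊤ := by
      intro heq
      have hadj : (delVW G v w).Adj v w := by
        rw [heq]
        exact SimpleGraph.Subgraph.top_adj.2 hvw
      exact (delVW_adj.1 hadj).2 rfl
    have hHB := h2 (delVW G v w) hHneB
    rw [IsRamseyCyc] at hHB
    obtain ⟨c₀, hc₀⟩ := not_forall.1 hHB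
    set ggB : V → V → Fin 2 := fun a b => c₀ s(⟨a, delVW_mem⟩, ⟨b, delVW_mem⟩) with hggBdef
    have hggBsymm : ∀ a b, ggB a b = ggB b a := by
      intro a b
      simp only [hggBdef]
      congr 1
      exact Sym2.eq_swap
    rcases habs with hab | hab | hab | hab | hab
    · -- edge vx missing
      set chat : Sym2 (V ⊕ Fin 2) → Fin 2 :=
        hatc v w ggB hggBsymm 0 0 0 1 1 with hchat
      obtain ⟨α, Wc, hWc, k, hmono⟩ := hram (fun e => chat (Sym2.map Subtype.val e))
      set K := subMono Hs chat k with hKdef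
      obtain ⟨u0, W0, hW0⟩ : ∃ u, ∃ W : K.Walk u u, W.IsCycle := coe_mono_cycle_up hWc hmono
      have KadjI : ∀ p q, K.Adj p q ↔ Hs.Adj p q ∧ chat s(p, q) = k := fun p q => Iff.rfl
      have hKH : ∀ a b : V, K.Adj (inl a) (inl b) → ∃ (ha : a ∈ (delVW G v w).verts)
          (hb : b ∈ (delVW G v w).verts), (delVW G v w).Adj a b ∧ c₀ s(⟨a, ha⟩, ⟨b, hb⟩) = k := by
        intro a b hab'
        obtain ⟨h1, h2⟩ := (KadjI _ _).1 hab'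
        have hG := dE_adj_inl_inl.1 (Hs.adj_sub h1)
        refine ⟨delVW_mem, delVW_mem, ⟨hG.1, hG.2⟩, ?_⟩
        rw [hchat, hatc_ll] at h2
        simp only [hggBdef] at h2
        exact h2
      have hnbr0 : ∀ z, K.Adj (inr 0) z →
          (z = inl v ∧ Hs.Adj (inr 0) (inl v) ∧ (0 : Fin 2) = k) ∨
          (z = inl w ∧ Hs.Adj (inr 0) (inl w) ∧ (0 : Fin 2) = k) ∨
          (z = inr 1 ∧ Hs.Adj (inr 0) (inr 1) ∧ (1 : Fin 2) = k) := by
        intro z hz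
        obtain ⟨h1, h2⟩ := (KadjI _ _).1 hz
        rcases dE_nbr0 (Hs.adj_sub h1) with rfl | rfl | rfl
        · rw [hchat, hatc_xv] at h2
          exact Or.inl ⟨rfl, h1, h2⟩
        · rw [hchat, hatc_xw hvw.ne'] at h2
          exact Or.inr (Or.inl ⟨rfl, h1, h2⟩)
        · rw [hchat, hatc_xy] at h2
          exact Or.inr (Or.inr ⟨rfl, h1, h2⟩)
      have hnbr1 : ∀ z, K.Adj (inr 1) z →
          (z = inl v ∧ Hs.Adj (inr 1) (inl v) ∧ (0 : Fin 2) = k) ∨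
          (z = inl w ∧ Hs.Adj (inr 1) (inl w) ∧ (1 : Fin 2) = k) ∨
          (z = inr 0 ∧ Hs.Adj (inr 1) (inr 0) ∧ (1 : Fin 2) = k) := by
        intro z hz
        obtain ⟨h1, h2⟩ := (KadjI _ _).1 hz
        rcases dE_nbr1 (Hs.adj_sub h1) with rfl | rfl | rfl
        · rw [hchat, hatc_yv] at h2
          exact Or.inl ⟨rfl, h1, h2⟩
        · rw [hchat, hatc_yw hvw.ne'] at h2
          exact Or.inr (Or.inl ⟨rfl, h1, h2⟩)
        · rw [hchat, hatc_xy] at h2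
          exact Or.inr (Or.inr ⟨rfl, h1, h2⟩)
      rcases (show ∀ a : Fin 2, a = 0 ∨ a = 1 by decide) k with rfl | rfl
      · have havx : ∀ z, K.Adj (inr 0) z → z = inl w := by
          intro z hz
          rcases hnbr0 z hz with ⟨rfl, hAdj, hcol⟩ | ⟨rfl, hAdj, hcol⟩ | ⟨rfl, hAdj, hcol⟩
          · exact absurd hAdj.symm hab
          · rfl
          · exact absurd hcol (by decide)
        have hx := avoid_deg1 havx hW0
        have havy : ∀ z, K.Adj (inr 1) z → z = inr 0 ∨ z = inl v := by
          intro z hz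
          rcases hnbr1 z hz with ⟨rfl, hAdj, hcol⟩ | ⟨rfl, hAdj, hcol⟩ | ⟨rfl, hAdj, hcol⟩
          · exact Or.inr rfl
          · exact absurd hcol (by decide)
          · exact Or.inl rfl
        have hy := avoid_deg2 havy hW0 hx
        exact no_inl_cycle v hKH hc₀ hW0 (fun p hp => ⟨fun hh => hx (hh ▸ hp), fun hh => hy (hh ▸ hp)⟩)
      · have havx : ∀ z, K.Adj (inr 0) z → z = inr 1 := by
          intro z hz
          rcases hnbr0 z hz with ⟨rfl, hAdj, hcol⟩ | ⟨rfl, hAdj, hcol⟩ | ⟨rfl, hAdj, hcol⟩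
          · exact absurd hAdj.symm hab
          · exact absurd hcol (by decide)
          · rfl
        have hx := avoid_deg1 havx hW0
        have havy : ∀ z, K.Adj (inr 1) z → z = inr 0 ∨ z = inl w := by
          intro z hz
          rcases hnbr1 z hz with ⟨rfl, hAdj, hcol⟩ | ⟨rfl, hAdj, hcol⟩ | ⟨rfl, hAdj, hcol⟩
          · exact absurd hcol (by decide)
          · exact Or.inr rfl
          · exact Or.inl rfl
        have hy := avoid_deg2 havy hW0 hx
        exact no_inl_cycle v hKH hc₀ hW0 (fun p hp => ⟨fun hh => hx (hh ▸ hp), fun hh => hy (hh ▸ hp)⟩)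
    · -- edge wx missing
      set chat : Sym2 (V ⊕ Fin 2) → Fin 2 :=
        hatc v w ggB hggBsymm 0 1 0 0 1 with hchat
      obtain ⟨α, Wc, hWc, k, hmono⟩ := hram (fun e => chat (Sym2.map Subtype.val e))
      set K := subMono Hs chat k with hKdef
      obtain ⟨u0, W0, hW0⟩ : ∃ u, ∃ W : K.Walk u u, W.IsCycle := coe_mono_cycle_up hWc hmono
      have KadjI : ∀ p q, K.Adj p q ↔ Hs.Adj p q ∧ chat s(p, q) = k := fun p q => Iff.rfl
      have hKH : ∀ a b : V, K.Adj (inl a) (inl b) → ∃ (ha : a ∈ (delVW G v w).verts)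
          (hb : b ∈ (delVW G v w).verts), (delVW G v w).Adj a b ∧ c₀ s(⟨a, ha⟩, ⟨b, hb⟩) = k := by
        intro a b hab'
        obtain ⟨h1, h2⟩ := (KadjI _ _).1 hab'
        have hG := dE_adj_inl_inl.1 (Hs.adj_sub h1)
        refine ⟨delVW_mem, delVW_mem, ⟨hG.1, hG.2⟩, ?_⟩
        rw [hchat, hatc_ll] at h2
        simp only [hggBdef] at h2
        exact h2
      have hnbr0 : ∀ z, K.Adj (inr 0) z →
          (z = inl v ∧ Hs.Adj (inr 0) (inl v) ∧ (0 : Fin 2) = k) ∨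
          (z = inl w ∧ Hs.Adj (inr 0) (inl w) ∧ (0 : Fin 2) = k) ∨
          (z = inr 1 ∧ Hs.Adj (inr 0) (inr 1) ∧ (1 : Fin 2) = k) := by
        intro z hz
        obtain ⟨h1, h2⟩ := (KadjI _ _).1 hz
        rcases dE_nbr0 (Hs.adj_sub h1) with rfl | rfl | rfl
        · rw [hchat, hatc_xv] at h2
          exact Or.inl ⟨rfl, h1, h2⟩
        · rw [hchat, hatc_xw hvw.ne'] at h2
          exact Or.inr (Or.inl ⟨rfl, h1, h2⟩)
        · rw [hchat, hatc_xy] at h2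
          exact Or.inr (Or.inr ⟨rfl, h1, h2⟩)
      have hnbr1 : ∀ z, K.Adj (inr 1) z →
          (z = inl v ∧ Hs.Adj (inr 1) (inl v) ∧ (1 : Fin 2) = k) ∨
          (z = inl w ∧ Hs.Adj (inr 1) (inl w) ∧ (0 : Fin 2) = k) ∨
          (z = inr 0 ∧ Hs.Adj (inr 1) (inr 0) ∧ (1 : Fin 2) = k) := by
        intro z hz
        obtain ⟨h1, h2⟩ := (KadjI _ _).1 hz
        rcases dE_nbr1 (Hs.adj_sub h1) with rfl | rfl | rfl
        · rw [hchat, hatc_yv] at h2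
          exact Or.inl ⟨rfl, h1, h2⟩
        · rw [hchat, hatc_yw hvw.ne'] at h2
          exact Or.inr (Or.inl ⟨rfl, h1, h2⟩)
        · rw [hchat, hatc_xy] at h2
          exact Or.inr (Or.inr ⟨rfl, h1, h2⟩)
      rcases (show ∀ a : Fin 2, a = 0 ∨ a = 1 by decide) k with rfl | rfl
      · have havx : ∀ z, K.Adj (inr 0) z → z = inl v := by
          intro z hz
          rcases hnbr0 z hz with ⟨rfl, hAdj, hcol⟩ | ⟨rfl, hAdj, hcol⟩ | ⟨rfl, hAdj, hcol⟩
          · rfl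
          · exact absurd hAdj.symm hab
          · exact absurd hcol (by decide)
        have hx := avoid_deg1 havx hW0
        have havy : ∀ z, K.Adj (inr 1) z → z = inr 0 ∨ z = inl w := by
          intro z hz
          rcases hnbr1 z hz with ⟨rfl, hAdj, hcol⟩ | ⟨rfl, hAdj, hcol⟩ | ⟨rfl, hAdj, hcol⟩
          · exact absurd hcol (by decide)
          · exact Or.inr rfl
          · exact Or.inl rfl
        have hy := avoid_deg2 havy hW0 hx
        exact no_inl_cycle v hKH hc₀ hW0 (fun p hp => ⟨fun hh => hx (hh ▸ hp), fun hh => hy (hh ▸ hp)⟩)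
      · have havx : ∀ z, K.Adj (inr 0) z → z = inr 1 := by
          intro z hz
          rcases hnbr0 z hz with ⟨rfl, hAdj, hcol⟩ | ⟨rfl, hAdj, hcol⟩ | ⟨rfl, hAdj, hcol⟩
          · exact absurd hcol (by decide)
          · exact absurd hAdj.symm hab
          · rfl
        have hx := avoid_deg1 havx hW0
        have havy : ∀ z, K.Adj (inr 1) z → z = inr 0 ∨ z = inl v := by
          intro z hz
          rcases hnbr1 z hz with ⟨rfl, hAdj, hcol⟩ | ⟨rfl, hAdj, hcol⟩ | ⟨rfl, hAdj, hcol⟩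
          · exact Or.inr rfl
          · exact absurd hcol (by decide)
          · exact Or.inl rfl
        have hy := avoid_deg2 havy hW0 hx
        exact no_inl_cycle v hKH hc₀ hW0 (fun p hp => ⟨fun hh => hx (hh ▸ hp), fun hh => hy (hh ▸ hp)⟩)
    · -- edge vy missing
      set chat : Sym2 (V ⊕ Fin 2) → Fin 2 :=
        hatc v w ggB hggBsymm 0 0 1 0 1 with hchat
      obtain ⟨α, Wc, hWc, k, hmono⟩ := hram (fun e => chat (Sym2.map Subtype.val e))
      set K := subMono Hs chat k with hKdef
      obtain ⟨u0, W0, hW0⟩ : ∃ u, ∃ W : K.Walk u u, W.IsCycle := coe_mono_cycle_up hWc hmono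
      have KadjI : ∀ p q, K.Adj p q ↔ Hs.Adj p q ∧ chat s(p, q) = k := fun p q => Iff.rfl
      have hKH : ∀ a b : V, K.Adj (inl a) (inl b) → ∃ (ha : a ∈ (delVW G v w).verts)
          (hb : b ∈ (delVW G v w).verts), (delVW G v w).Adj a b ∧ c₀ s(⟨a, ha⟩, ⟨b, hb⟩) = k := by
        intro a b hab'
        obtain ⟨h1, h2⟩ := (KadjI _ _).1 hab'
        have hG := dE_adj_inl_inl.1 (Hs.adj_sub h1)
        refine ⟨delVW_mem, delVW_mem, ⟨hG.1, hG.2⟩, ?_⟩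
        rw [hchat, hatc_ll] at h2
        simp only [hggBdef] at h2
        exact h2
      have hnbr0 : ∀ z, K.Adj (inr 0) z →
          (z = inl v ∧ Hs.Adj (inr 0) (inl v) ∧ (0 : Fin 2) = k) ∨
          (z = inl w ∧ Hs.Adj (inr 0) (inl w) ∧ (1 : Fin 2) = k) ∨
          (z = inr 1 ∧ Hs.Adj (inr 0) (inr 1) ∧ (1 : Fin 2) = k) := by
        intro z hz
        obtain ⟨h1, h2⟩ := (KadjI _ _).1 hz
        rcases dE_nbr0 (Hs.adj_sub h1) with rfl | rfl | rfl
        · rw [hchat, hatc_xv] at h2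
          exact Or.inl ⟨rfl, h1, h2⟩
        · rw [hchat, hatc_xw hvw.ne'] at h2
          exact Or.inr (Or.inl ⟨rfl, h1, h2⟩)
        · rw [hchat, hatc_xy] at h2
          exact Or.inr (Or.inr ⟨rfl, h1, h2⟩)
      have hnbr1 : ∀ z, K.Adj (inr 1) z →
          (z = inl v ∧ Hs.Adj (inr 1) (inl v) ∧ (0 : Fin 2) = k) ∨
          (z = inl w ∧ Hs.Adj (inr 1) (inl w) ∧ (0 : Fin 2) = k) ∨
          (z = inr 0 ∧ Hs.Adj (inr 1) (inr 0) ∧ (1 : Fin 2) = k) := by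
        intro z hz
        obtain ⟨h1, h2⟩ := (KadjI _ _).1 hz
        rcases dE_nbr1 (Hs.adj_sub h1) with rfl | rfl | rfl
        · rw [hchat, hatc_yv] at h2
          exact Or.inl ⟨rfl, h1, h2⟩
        · rw [hchat, hatc_yw hvw.ne'] at h2
          exact Or.inr (Or.inl ⟨rfl, h1, h2⟩)
        · rw [hchat, hatc_xy] at h2
          exact Or.inr (Or.inr ⟨rfl, h1, h2⟩)
      rcases (show ∀ a : Fin 2, a = 0 ∨ a = 1 by decide) k with rfl | rfl
      · have havx : ∀ z, K.Adj (inr 1) z → z = inl w := by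
          intro z hz
          rcases hnbr1 z hz with ⟨rfl, hAdj, hcol⟩ | ⟨rfl, hAdj, hcol⟩ | ⟨rfl, hAdj, hcol⟩
          · exact absurd hAdj.symm hab
          · rfl
          · exact absurd hcol (by decide)
        have hx := avoid_deg1 havx hW0
        have havy : ∀ z, K.Adj (inr 0) z → z = inr 1 ∨ z = inl v := by
          intro z hz
          rcases hnbr0 z hz with ⟨rfl, hAdj, hcol⟩ | ⟨rfl, hAdj, hcol⟩ | ⟨rfl, hAdj, hcol⟩
          · exact Or.inr rfl
          · exact absurd hcol (by decide)
          · exact Or.inl rfl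
        have hy := avoid_deg2 havy hW0 hx
        exact no_inl_cycle v hKH hc₀ hW0 (fun p hp => ⟨fun hh => hy (hh ▸ hp), fun hh => hx (hh ▸ hp)⟩)
      · have havx : ∀ z, K.Adj (inr 1) z → z = inr 0 := by
          intro z hz
          rcases hnbr1 z hz with ⟨rfl, hAdj, hcol⟩ | ⟨rfl, hAdj, hcol⟩ | ⟨rfl, hAdj, hcol⟩
          · exact absurd hAdj.symm hab
          · exact absurd hcol (by decide)
          · rfl
        have hx := avoid_deg1 havx hW0
        have havy : ∀ z, K.Adj (inr 0) z → z = inr 1 ∨ z = inl w := by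
          intro z hz
          rcases hnbr0 z hz with ⟨rfl, hAdj, hcol⟩ | ⟨rfl, hAdj, hcol⟩ | ⟨rfl, hAdj, hcol⟩
          · exact absurd hcol (by decide)
          · exact Or.inr rfl
          · exact Or.inl rfl
        have hy := avoid_deg2 havy hW0 hx
        exact no_inl_cycle v hKH hc₀ hW0 (fun p hp => ⟨fun hh => hy (hh ▸ hp), fun hh => hx (hh ▸ hp)⟩)
    · -- edge wy missing
      set chat : Sym2 (V ⊕ Fin 2) → Fin 2 :=
        hatc v w ggB hggBsymm 1 0 0 0 1 with hchat
      obtain ⟨α, Wc, hWc, k, hmono⟩ := hram (fun e => chat (Sym2.map Subtype.val e))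
      set K := subMono Hs chat k with hKdef
      obtain ⟨u0, W0, hW0⟩ : ∃ u, ∃ W : K.Walk u u, W.IsCycle := coe_mono_cycle_up hWc hmono
      have KadjI : ∀ p q, K.Adj p q ↔ Hs.Adj p q ∧ chat s(p, q) = k := fun p q => Iff.rfl
      have hKH : ∀ a b : V, K.Adj (inl a) (inl b) → ∃ (ha : a ∈ (delVW G v w).verts)
          (hb : b ∈ (delVW G v w).verts), (delVW G v w).Adj a b ∧ c₀ s(⟨a, ha⟩, ⟨b, hb⟩) = k := by
        intro a b hab'
        obtain ⟨h1, h2⟩ := (KadjI _ _).1 hab'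
        have hG := dE_adj_inl_inl.1 (Hs.adj_sub h1)
        refine ⟨delVW_mem, delVW_mem, ⟨hG.1, hG.2⟩, ?_⟩
        rw [hchat, hatc_ll] at h2
        simp only [hggBdef] at h2
        exact h2
      have hnbr0 : ∀ z, K.Adj (inr 0) z →
          (z = inl v ∧ Hs.Adj (inr 0) (inl v) ∧ (1 : Fin 2) = k) ∨
          (z = inl w ∧ Hs.Adj (inr 0) (inl w) ∧ (0 : Fin 2) = k) ∨
          (z = inr 1 ∧ Hs.Adj (inr 0) (inr 1) ∧ (1 : Fin 2) = k) := by
        intro z hz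
        obtain ⟨h1, h2⟩ := (KadjI _ _).1 hz
        rcases dE_nbr0 (Hs.adj_sub h1) with rfl | rfl | rfl
        · rw [hchat, hatc_xv] at h2
          exact Or.inl ⟨rfl, h1, h2⟩
        · rw [hchat, hatc_xw hvw.ne'] at h2
          exact Or.inr (Or.inl ⟨rfl, h1, h2⟩)
        · rw [hchat, hatc_xy] at h2
          exact Or.inr (Or.inr ⟨rfl, h1, h2⟩)
      have hnbr1 : ∀ z, K.Adj (inr 1) z →
          (z = inl v ∧ Hs.Adj (inr 1) (inl v) ∧ (0 : Fin 2) = k) ∨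
          (z = inl w ∧ Hs.Adj (inr 1) (inl w) ∧ (0 : Fin 2) = k) ∨
          (z = inr 0 ∧ Hs.Adj (inr 1) (inr 0) ∧ (1 : Fin 2) = k) := by
        intro z hz
        obtain ⟨h1, h2⟩ := (KadjI _ _).1 hz
        rcases dE_nbr1 (Hs.adj_sub h1) with rfl | rfl | rfl
        · rw [hchat, hatc_yv] at h2
          exact Or.inl ⟨rfl, h1, h2⟩
        · rw [hchat, hatc_yw hvw.ne'] at h2
          exact Or.inr (Or.inl ⟨rfl, h1, h2⟩)
        · rw [hchat, hatc_xy] at h2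
          exact Or.inr (Or.inr ⟨rfl, h1, h2⟩)
      rcases (show ∀ a : Fin 2, a = 0 ∨ a = 1 by decide) k with rfl | rfl
      · have havx : ∀ z, K.Adj (inr 1) z → z = inl v := by
          intro z hz
          rcases hnbr1 z hz with ⟨rfl, hAdj, hcol⟩ | ⟨rfl, hAdj, hcol⟩ | ⟨rfl, hAdj, hcol⟩
          · rfl
          · exact absurd hAdj.symm hab
          · exact absurd hcol (by decide)
        have hx := avoid_deg1 havx hW0
        have havy : ∀ z, K.Adj (inr 0) z → z = inr 1 ∨ z = inl w := by
          intro z hz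
          rcases hnbr0 z hz with ⟨rfl, hAdj, hcol⟩ | ⟨rfl, hAdj, hcol⟩ | ⟨rfl, hAdj, hcol⟩
          · exact absurd hcol (by decide)
          · exact Or.inr rfl
          · exact Or.inl rfl
        have hy := avoid_deg2 havy hW0 hx
        exact no_inl_cycle v hKH hc₀ hW0 (fun p hp => ⟨fun hh => hy (hh ▸ hp), fun hh => hx (hh ▸ hp)⟩)
      · have havx : ∀ z, K.Adj (inr 1) z → z = inr 0 := by
          intro z hz
          rcases hnbr1 z hz with ⟨rfl, hAdj, hcol⟩ | ⟨rfl, hAdj, hcol⟩ | ⟨rfl, hAdj, hcol⟩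
          · exact absurd hcol (by decide)
          · exact absurd hAdj.symm hab
          · rfl
        have hx := avoid_deg1 havx hW0
        have havy : ∀ z, K.Adj (inr 0) z → z = inr 1 ∨ z = inl v := by
          intro z hz
          rcases hnbr0 z hz with ⟨rfl, hAdj, hcol⟩ | ⟨rfl, hAdj, hcol⟩ | ⟨rfl, hAdj, hcol⟩
          · exact Or.inr rfl
          · exact absurd hcol (by decide)
          · exact Or.inl rfl
        have hy := avoid_deg2 havy hW0 hx
        exact no_inl_cycle v hKH hc₀ hW0 (fun p hp => ⟨fun hh => hy (hh ▸ hp), fun hh => hx (hh ▸ hp)⟩)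
    · -- edge xy missing
      set chat : Sym2 (V ⊕ Fin 2) → Fin 2 :=
        hatc v w ggB hggBsymm 0 1 1 0 0 with hchat
      obtain ⟨α, Wc, hWc, k, hmono⟩ := hram (fun e => chat (Sym2.map Subtype.val e))
      set K := subMono Hs chat k with hKdef
      obtain ⟨u0, W0, hW0⟩ : ∃ u, ∃ W : K.Walk u u, W.IsCycle := coe_mono_cycle_up hWc hmono
      have KadjI : ∀ p q, K.Adj p q ↔ Hs.Adj p q ∧ chat s(p, q) = k := fun p q => Iff.rfl
      have hKH : ∀ a b : V, K.Adj (inl a) (inl b) → ∃ (ha : a ∈ (delVW G v w).verts)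
          (hb : b ∈ (delVW G v w).verts), (delVW G v w).Adj a b ∧ c₀ s(⟨a, ha⟩, ⟨b, hb⟩) = k := by
        intro a b hab'
        obtain ⟨h1, h2⟩ := (KadjI _ _).1 hab'
        have hG := dE_adj_inl_inl.1 (Hs.adj_sub h1)
        refine ⟨delVW_mem, delVW_mem, ⟨hG.1, hG.2⟩, ?_⟩
        rw [hchat, hatc_ll] at h2
        simp only [hggBdef] at h2
        exact h2
      have hnbr0 : ∀ z, K.Adj (inr 0) z →
          (z = inl v ∧ Hs.Adj (inr 0) (inl v) ∧ (0 : Fin 2) = k) ∨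
          (z = inl w ∧ Hs.Adj (inr 0) (inl w) ∧ (1 : Fin 2) = k) ∨
          (z = inr 1 ∧ Hs.Adj (inr 0) (inr 1) ∧ (0 : Fin 2) = k) := by
        intro z hz
        obtain ⟨h1, h2⟩ := (KadjI _ _).1 hz
        rcases dE_nbr0 (Hs.adj_sub h1) with rfl | rfl | rfl
        · rw [hchat, hatc_xv] at h2
          exact Or.inl ⟨rfl, h1, h2⟩
        · rw [hchat, hatc_xw hvw.ne'] at h2
          exact Or.inr (Or.inl ⟨rfl, h1, h2⟩)
        · rw [hchat, hatc_xy] at h2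
          exact Or.inr (Or.inr ⟨rfl, h1, h2⟩)
      have hnbr1 : ∀ z, K.Adj (inr 1) z →
          (z = inl v ∧ Hs.Adj (inr 1) (inl v) ∧ (1 : Fin 2) = k) ∨
          (z = inl w ∧ Hs.Adj (inr 1) (inl w) ∧ (0 : Fin 2) = k) ∨
          (z = inr 0 ∧ Hs.Adj (inr 1) (inr 0) ∧ (0 : Fin 2) = k) := by
        intro z hz
        obtain ⟨h1, h2⟩ := (KadjI _ _).1 hz
        rcases dE_nbr1 (Hs.adj_sub h1) with rfl | rfl | rfl
        · rw [hchat, hatc_yv] at h2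
          exact Or.inl ⟨rfl, h1, h2⟩
        · rw [hchat, hatc_yw hvw.ne'] at h2
          exact Or.inr (Or.inl ⟨rfl, h1, h2⟩)
        · rw [hchat, hatc_xy] at h2
          exact Or.inr (Or.inr ⟨rfl, h1, h2⟩)
      rcases (show ∀ a : Fin 2, a = 0 ∨ a = 1 by decide) k with rfl | rfl
      · have havx : ∀ z, K.Adj (inr 0) z → z = inl v := by
          intro z hz
          rcases hnbr0 z hz with ⟨rfl, hAdj, hcol⟩ | ⟨rfl, hAdj, hcol⟩ | ⟨rfl, hAdj, hcol⟩
          · rfl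
          · exact absurd hcol (by decide)
          · exact absurd hAdj hab
        have hx := avoid_deg1 havx hW0
        have havy : ∀ z, K.Adj (inr 1) z → z = inr 0 ∨ z = inl w := by
          intro z hz
          rcases hnbr1 z hz with ⟨rfl, hAdj, hcol⟩ | ⟨rfl, hAdj, hcol⟩ | ⟨rfl, hAdj, hcol⟩
          · exact absurd hcol (by decide)
          · exact Or.inr rfl
          · exact absurd hAdj.symm hab
        have hy := avoid_deg2 havy hW0 hx
        exact no_inl_cycle v hKH hc₀ hW0 (fun p hp => ⟨fun hh => hx (hh ▸ hp), fun hh => hy (hh ▸ hp)⟩)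
      · have havx : ∀ z, K.Adj (inr 0) z → z = inl w := by
          intro z hz
          rcases hnbr0 z hz with ⟨rfl, hAdj, hcol⟩ | ⟨rfl, hAdj, hcol⟩ | ⟨rfl, hAdj, hcol⟩
          · exact absurd hcol (by decide)
          · rfl
          · exact absurd hAdj hab
        have hx := avoid_deg1 havx hW0
        have havy : ∀ z, K.Adj (inr 1) z → z = inr 0 ∨ z = inl v := by
          intro z hz
          rcases hnbr1 z hz with ⟨rfl, hAdj, hcol⟩ | ⟨rfl, hAdj, hcol⟩ | ⟨rfl, hAdj, hcol⟩
          · exact Or.inr rfl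
          · exact absurd hcol (by decide)
          · exact absurd hAdj.symm hab
        have hy := avoid_deg2 havy hW0 hx
        exact no_inl_cycle v hKH hc₀ hW0 (fun p hp => ⟨fun hh => hx (hh ▸ hp), fun hh => hy (hh ▸ hp)⟩)
end PartBMain

/-- if `G` is a minimal 2-Ramsey graph for cyclicity and `vw` is an
edge of `G`, then the graph obtained by replacing `vw` with a diamond is again a
minimal 2-Ramsey graph for cyclicity. -/
theorem stmt12 {V : Type*} [Fintype V] (G : SimpleGraph V) (v w : V)
    (hvw : G.Adj v w) (h : IsMinRamseyCyc 2 G) :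
    IsMinRamseyCyc 2 (diamondExtension G v w) := by
  exact ⟨partA hvw h.1, fun Hs hne => partB hvw h.2 Hs hne⟩
end

section
/- Let D be a graph with two non-adjacent vertices c, d such that every 2-edge-coloring of D without a monochromatic cycle contains a monochromatic path joining c and d. If G is 2-Ramsey for cyclicity and e = ab is an edge of G, then the graph G* obtained by deleting e and gluing in a copy of D with c identified to a and d identified to b is also 2-Ramsey for cyclicity. -/
/-- The identification map sending `c ↦ a`, `d ↦ b` and every other vertex of `W`
to its own copy. -/
def glueMap {V W : Type*} [DecidableEq W] (a b : V) (c d : W) (x : W) :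
    V ⊕ {w : W // w ≠ c ∧ w ≠ d} :=
  if hc : x = c then Sum.inl a
  else if hd : x = d then Sum.inl b
  else Sum.inr ⟨x, hc, hd⟩

/-- Parallel composition: delete the edge `ab` from `G` and glue in a copy of `D`,
identifying `c` with `a` and `d` with `b` (otherwise disjoint). -/
def glue {V W : Type*} [DecidableEq W] (G : SimpleGraph V) (D : SimpleGraph W)
    (a b : V) (c d : W) : SimpleGraph (V ⊕ {w : W // w ≠ c ∧ w ≠ d}) :=
  SimpleGraph.fromRel (fun p q =>
    (∃ x y : W, D.Adj x y ∧ p = glueMap a b c d x ∧ q = glueMap a b c d y) ∨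
    (∃ x y : V, G.Adj x y ∧ s(x, y) ≠ s(a, b) ∧ p = Sum.inl x ∧ q = Sum.inl y))

section Aux

open SimpleGraph

variable {V W : Type*} [DecidableEq W] {G : SimpleGraph V} {D : SimpleGraph W}
  {a b : V} {c d : W}

lemma glueMap_inj (hab : a ≠ b) : Function.Injective (glueMap a b c d (V := V)) := by
  intro x y hxy
  unfold glueMap at hxy
  split_ifs at hxy <;> simp_all

lemma glueMap_eq_inl {x : W} {v : V} (h : glueMap a b c d x = Sum.inl v) :
    x = c ∨ x = d := by
  unfold glueMap at h
  split_ifs at h <;> simp_all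

lemma glue_adj_of_D (hab : a ≠ b) {x y : W} (hxy : D.Adj x y) :
    (glue G D a b c d).Adj (glueMap a b c d x) (glueMap a b c d y) := by
  rw [glue, SimpleGraph.fromRel_adj]
  exact ⟨fun h => hxy.ne (glueMap_inj hab h), Or.inl (Or.inl ⟨x, y, hxy, rfl, rfl⟩)⟩

lemma glue_adj_of_G {x y : V} (hxy : G.Adj x y) (hne : s(x, y) ≠ s(a, b)) :
    (glue G D a b c d).Adj (Sum.inl x) (Sum.inl y) := by
  rw [glue, SimpleGraph.fromRel_adj]
  exact ⟨by simpa using hxy.ne, Or.inl (Or.inr ⟨x, y, hxy, hne, rfl, rfl⟩)⟩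

end Aux

/-- let `D` have non-adjacent vertices `c, d` such that every
2-edge-colouring of `D` without a monochromatic cycle has a monochromatic path from
`c` to `d`. If `G` is 2-Ramsey for cyclicity and `ab` is an edge of `G`, then the
graph obtained by deleting `ab` and gluing in `D` (with `c = a`, `d = b`) is also
2-Ramsey for cyclicity. -/
theorem stmt13 {V W : Type*} [Fintype V] [Fintype W] [DecidableEq W]
    (G : SimpleGraph V) (D : SimpleGraph W) (a b : V) (c d : W)
    (hcd : c ≠ d) (hnadj : ¬ D.Adj c d) (hab : G.Adj a b)
    (hD : ∀ col : Sym2 W → Fin 2,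
      (¬ ∃ (x : W) (wk : D.Walk x x), wk.IsCycle ∧ ∃ i : Fin 2, ∀ e ∈ wk.edges, col e = i) →
      ∃ (p : D.Walk c d) (i : Fin 2), p.IsPath ∧ ∀ e ∈ p.edges, col e = i)
    (h : IsRamseyCyc 2 G) :
    IsRamseyCyc 2 (glue G D a b c d) := by
  classical
  intro col
  have hinj : Function.Injective (glueMap a b c d (V := V)) := glueMap_inj hab.ne
  set f := glueMap a b c d (V := V) with hf
  let φ : D →g glue G D a b c d := ⟨f, fun {x y} hxy => glue_adj_of_D hab.ne hxy⟩
  have hfc : f c = Sum.inl a := by simp [hf, glueMap]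
  have hfd : f d = Sum.inl b := by simp [hf, glueMap, hcd.symm]
  let colD : Sym2 W → Fin 2 := fun e => col (e.map f)
  by_cases hDc : ∃ (x : W) (wk : D.Walk x x), wk.IsCycle ∧
      ∃ i : Fin 2, ∀ e ∈ wk.edges, colD e = i
  · -- a monochromatic cycle inside the copy of `D`
    obtain ⟨x, wk, hcyc, i, hi⟩ := hDc
    refine ⟨f x, wk.map φ, hcyc.map hinj, i, ?_⟩
    intro e he
    rw [SimpleGraph.Walk.edges_map] at he
    obtain ⟨e', he', rfl⟩ := List.mem_map.mp he
    exact hi e' he'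
  · obtain ⟨p, i, hp, hpc⟩ := hD colD hDc
    let colG : Sym2 V → Fin 2 := fun e => if e = s(a, b) then i else col (e.map Sum.inl)
    obtain ⟨v, w, hw, j, hj⟩ := h colG
    by_cases hmem : s(a, b) ∈ w.edges
    · -- replace the edge `ab` of the cycle by the monochromatic path through `D`
      have hji : i = j := by simpa [colG] using hj _ hmem
      set H : SimpleGraph V := SimpleGraph.fromEdgeSet {e | e ∈ w.edges} with hH
      have hsubH : ∀ e ∈ w.edges, e ∈ H.edgeSet := by
        intro e he
        rw [hH, SimpleGraph.edgeSet_fromEdgeSet]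
        exact ⟨he, G.not_isDiag_of_mem_edgeSet (w.edges_subset_edgeSet he)⟩
      have hreach : (H \ SimpleGraph.fromEdgeSet {s(a, b)}).Reachable a b :=
        (SimpleGraph.adj_and_reachable_delete_edges_iff_exists_cycle.mpr
          ⟨v, w.transfer H hsubH, hw.transfer hsubH, by
            rw [SimpleGraph.Walk.edges_transfer]; exact hmem⟩).2
      obtain ⟨q0⟩ := hreach
      set q := q0.bypass with hqdef
      have hq : q.IsPath := q0.bypass_isPath
      have hqe : ∀ e ∈ q.edges, e ∈ w.edges ∧ e ≠ s(a, b) := by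
        intro e he
        have he' := q.edges_subset_edgeSet he
        rw [hH] at he'
        simp only [SimpleGraph.edgeSet_sdiff, SimpleGraph.edgeSet_fromEdgeSet, Set.mem_diff,
          Set.mem_setOf_eq, Set.mem_singleton_iff, not_and, not_not] at he'
        exact ⟨he'.1.1, fun hc => he'.1.2 (he'.2 hc)⟩
      let χ : (H \ SimpleGraph.fromEdgeSet {s(a, b)}) →g glue G D a b c d :=
        ⟨Sum.inl, fun {x y} hxy => by
          rw [SimpleGraph.sdiff_adj] at hxy
          obtain ⟨hxy1, hxy2⟩ := hxy
          rw [hH, SimpleGraph.fromEdgeSet_adj] at hxy1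
          have hadjG : G.Adj x y := w.adj_of_mem_edges hxy1.1
          refine glue_adj_of_G hadjG fun hcon => hxy2 ?_
          rw [SimpleGraph.fromEdgeSet_adj]
          exact ⟨by simp [hcon], hadjG.ne⟩⟩
      let P : (glue G D a b c d).Walk (Sum.inl a) (Sum.inl b) := (p.map φ).copy hfc hfd
      let Q : (glue G D a b c d).Walk (Sum.inl a) (Sum.inl b) := q.map χ
      have hinjφ : Function.Injective (⇑φ) := hinj
      have hinjχ : Function.Injective (⇑χ) := Sum.inl_injective
      have hPedges : P.edges = p.edges.map (Sym2.map ⇑φ) := by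
        simp [P, SimpleGraph.Walk.edges_copy, SimpleGraph.Walk.edges_map]
      have hQedges : Q.edges = q.edges.map (Sym2.map ⇑χ) := by
        simp [Q, SimpleGraph.Walk.edges_map]
      have hQrev : Q.reverse = q.reverse.map χ := SimpleGraph.Walk.reverse_map χ q
      -- support facts
      have hpt : p.support.tail.Nodup ∧ c ∉ p.support.tail := by
        have := hp.support_nodup
        rw [p.support_eq_cons, List.nodup_cons] at this
        exact ⟨this.2, this.1⟩
      have hqt : q.reverse.support.tail.Nodup ∧ b ∉ q.reverse.support.tail := by
        have := hq.reverse.support_nodup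
        rw [q.reverse.support_eq_cons, List.nodup_cons] at this
        exact ⟨this.2, this.1⟩
      refine ⟨Sum.inl a, P.append Q.reverse, ⟨⟨⟨?_⟩, ?_⟩, ?_⟩, i, ?_⟩
      · -- edges are nodup
        rw [SimpleGraph.Walk.edges_append, List.nodup_append]
        refine ⟨?_, ?_, ?_⟩
        · rw [hPedges]
          exact hp.edges_nodup.map (Sym2.map.injective hinjφ)
        · rw [SimpleGraph.Walk.edges_reverse]
          exact List.nodup_reverse.mpr
            (hQedges ▸ hq.edges_nodup.map (Sym2.map.injective hinjχ))
        · rintro e heP _ heQ rfl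
          rw [hPedges] at heP
          rw [SimpleGraph.Walk.edges_reverse, List.mem_reverse, hQedges] at heQ
          obtain ⟨e1, he1, rfl⟩ := List.mem_map.mp heP
          obtain ⟨e2, he2, heq⟩ := List.mem_map.mp heQ
          induction e1 using Sym2.ind with | _ x y =>
          induction e2 using Sym2.ind with | _ u u' =>
          rw [Sym2.map_pair_eq, Sym2.map_pair_eq, Sym2.eq_iff] at heq
          have hDxy : D.Adj x y := p.adj_of_mem_edges he1
          have hx : ∃ z, f x = Sum.inl z := by
            rcases heq with ⟨h1, h2⟩ | ⟨h1, h2⟩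
            exacts [⟨u, h1.symm⟩, ⟨u', h2.symm⟩]
          have hy : ∃ z, f y = Sum.inl z := by
            rcases heq with ⟨h1, h2⟩ | ⟨h1, h2⟩
            exacts [⟨u', h2.symm⟩, ⟨u, h1.symm⟩]
          obtain ⟨zx, hzx⟩ := hx
          obtain ⟨zy, hzy⟩ := hy
          rcases glueMap_eq_inl hzx with rfl | rfl <;>
            rcases glueMap_eq_inl hzy with rfl | rfl
          · exact hDxy.ne rfl
          · exact hnadj hDxy
          · exact hnadj hDxy.symm
          · exact hDxy.ne rfl
      · -- not nil
        intro hnil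
        have hlen : (P.append Q.reverse).length = 0 := by rw [hnil]; rfl
        rw [SimpleGraph.Walk.length_append] at hlen
        have hP0 : P.length = 0 := by omega
        exact hab.ne (Sum.inl.inj (SimpleGraph.Walk.eq_of_length_eq_zero hP0))
      · -- support tail is nodup
        rw [SimpleGraph.Walk.tail_support_append]
        have hPs : P.support = p.support.map ⇑φ := by
          simp [P, SimpleGraph.Walk.support_copy, SimpleGraph.Walk.support_map]
        have hQs : Q.reverse.support = q.reverse.support.map ⇑χ := by
          rw [hQrev, SimpleGraph.Walk.support_map]
        rw [hPs, hQs, p.support_eq_cons, q.reverse.support_eq_cons, List.map_cons,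
          List.map_cons, List.tail_cons, List.tail_cons, List.nodup_append]
        refine ⟨hpt.1.map hinjφ, hqt.1.map hinjχ, ?_⟩
        rintro z hz1 _ hz2 rfl
        obtain ⟨x, hx, rfl⟩ := List.mem_map.mp hz1
        obtain ⟨y, hy, hxy⟩ := List.mem_map.mp hz2
        rcases glueMap_eq_inl hxy.symm with rfl | rfl
        · exact hpt.2 hx
        · have hxy' := hxy.trans hfd
          exact hqt.2 ((Sum.inl.inj hxy') ▸ hy)
      · -- monochromatic of colour i
        intro e he
        rw [SimpleGraph.Walk.edges_append, List.mem_append] at he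
        rcases he with he | he
        · rw [hPedges] at he
          obtain ⟨e', he', rfl⟩ := List.mem_map.mp he
          exact hpc e' he'
        · rw [SimpleGraph.Walk.edges_reverse, List.mem_reverse, hQedges] at he
          obtain ⟨e', he', rfl⟩ := List.mem_map.mp he
          have h2 := hqe e' he'
          have h3 : col (Sym2.map Sum.inl e') = j := by
            simpa [colG, h2.2] using hj e' h2.1
          rw [hji]
          exact h3
    · -- the cycle avoids edge `ab`: map it straight into the glued graph
      let G' := G.deleteEdges {s(a, b)}
      have hsub : ∀ e ∈ w.edges, e ∈ G'.edgeSet := by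
        intro e he
        rw [SimpleGraph.edgeSet_deleteEdges]
        exact ⟨w.edges_subset_edgeSet he, fun hcon => hmem (Set.mem_singleton_iff.mp hcon ▸ he)⟩
      let ψ : G' →g glue G D a b c d :=
        ⟨Sum.inl, fun {x y} hxy => by
          rw [SimpleGraph.deleteEdges_adj] at hxy
          exact glue_adj_of_G hxy.1 (by simpa using hxy.2)⟩
      refine ⟨Sum.inl v, (w.transfer G' hsub).map ψ,
        (hw.transfer hsub).map Sum.inl_injective, j, ?_⟩
      intro e he
      rw [SimpleGraph.Walk.edges_map, SimpleGraph.Walk.edges_transfer] at he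
      obtain ⟨e', he', rfl⟩ := List.mem_map.mp he
      have hne : e' ≠ s(a, b) := fun hcon => hmem (hcon ▸ he')
      have h3 : col (Sym2.map Sum.inl e') = j := by
        simpa [colG, hne] using hj e' he'
      exact h3
end

section
/- The complete bipartite graph K_{3,5} is 2-Ramsey for cyclicity and is minimal: deleting any edge yields a graph that is not 2-Ramsey for cyclicity. -/
open SimpleGraph

lemma lemB {V : Type*} {G : SimpleGraph V} {u v : V} (hne : u ≠ v)
    (hr : ¬G.Reachable u v) (h : G.IsAcyclic) : (G ⊔ edge u v).IsAcyclic := by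
  classical
  intro w c hc
  by_cases he : s(u, v) ∈ c.edges
  · have h2 : ((G ⊔ edge u v) \ fromEdgeSet {s(u, v)}).Reachable u v :=
      (adj_and_reachable_delete_edges_iff_exists_cycle.mpr ⟨w, c, hc, he⟩).2
    refine hr (h2.mono ?_)
    intro x y hxy
    rw [sdiff_adj, sup_adj, fromEdgeSet_adj] at hxy
    obtain ⟨hl | hedge, hdel⟩ := hxy
    · exact hl
    · rw [edge_adj] at hedge
      exfalso
      apply hdel
      refine ⟨?_, hedge.2⟩
      obtain ⟨rfl, rfl⟩ | ⟨rfl, rfl⟩ := hedge.1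
      · rfl
      · exact Sym2.eq_swap
  · have hsub : ∀ e ∈ c.edges, e ∈ G.edgeSet := by
      intro e hee
      have h3 := c.edges_subset_edgeSet hee
      rw [edgeSet_sup, Set.mem_union, edge_edgeSet_of_ne hne] at h3
      rcases h3 with h3 | h3
      · exact h3
      · exact absurd (h3 ▸ hee) he
    exact h (c.transfer G hsub) (hc.transfer hsub)

lemma lemA {V : Type*} [Fintype V] [Nonempty V] {G : SimpleGraph V}
    (h : G.IsAcyclic) : G.edgeSet.ncard + 1 ≤ Fintype.card V := by
  classical
  set S : Set (SimpleGraph V) := {G' | G ≤ G' ∧ G'.IsAcyclic} with hS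
  haveI : Finite (SimpleGraph V) :=
    Finite.of_injective (fun G => G.Adj) fun G G' hGG => SimpleGraph.ext hGG
  have hfin : S.Finite := Set.toFinite S
  have hne : S.Nonempty := ⟨G, le_refl G, h⟩
  obtain ⟨G', hG'S, hmax⟩ := Set.Finite.exists_maximalFor (fun G' => G'.edgeSet.ncard) S hfin hne
  obtain ⟨hle, hacy⟩ := hG'S
  have hconn : G'.Connected := by
    rw [connected_iff]
    refine ⟨fun u v => ?_, ‹Nonempty V›⟩
    by_contra hruv
    have huv : u ≠ v := by rintro rfl; exact hruv (Reachable.refl u)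
    have hadj : ¬G'.Adj u v := fun h' => hruv h'.reachable
    have hmem : (G' ⊔ edge u v) ∈ S := ⟨hle.trans le_sup_left, lemB huv hruv hacy⟩
    have hcard : (G' ⊔ edge u v).edgeSet.ncard = G'.edgeSet.ncard + 1 := by
      rw [edgeSet_sup, edge_edgeSet_of_ne huv]
      rw [Set.union_singleton, Set.ncard_insert_of_notMem (by simpa using hadj)
        (G'.edgeSet.toFinite)]
    have := hmax hmem (by dsimp only; omega)
    dsimp only at this
    omega
  have htree : G'.IsTree := ⟨hconn, hacy⟩
  have hcard := htree.card_edgeFinset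
  have h1 : G'.edgeSet.ncard = G'.edgeFinset.card := by
    rw [← coe_edgeFinset, Set.ncard_coe_finset]
  have h2 : G.edgeSet.ncard ≤ G'.edgeSet.ncard :=
    Set.ncard_le_ncard (edgeSet_mono hle) (G'.edgeSet.toFinite)
  omega

abbrev V8 := Fin 3 ⊕ Fin 5
abbrev G35 := completeBipartiteGraph (Fin 3) (Fin 5)

instance : DecidableRel G35.Adj := fun x y => by
  simp only [completeBipartiteGraph_adj]; infer_instance

lemma part1 : IsRamseyCyc 2 G35 := by
  classical
  intro c
  set S : Fin 2 → Finset (Sym2 V8) := fun i => G35.edgeFinset.filter (fun e => c e = i) with hS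
  have hsum : (S 0).card + (S 1).card = 15 := by
    have h15 : G35.edgeFinset.card = 15 := by decide
    rw [← h15, hS]
    simp only []
    rw [Finset.filter_congr (fun e _ => show (c e = 1) ↔ ¬ (c e = 0) by
      rcases Fin.exists_fin_two.mp ⟨c e, rfl⟩ with h | h <;> simp [h])]
    exact Finset.card_filter_add_card_filter_not _
  have hbig : ∃ i, 8 ≤ (S i).card := by
    by_contra hcon
    push_neg at hcon
    have h0 := hcon 0; have h1 := hcon 1; omega
  obtain ⟨i, hi⟩ := hbig
  set H : SimpleGraph V8 := fromEdgeSet ↑(S i) with hH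
  have hsub : ↑(S i) ⊆ G35.edgeSet := by
    intro e he
    exact mem_edgeFinset.mp (Finset.mem_filter.mp he).1
  have hHG : H ≤ G35 := by
    rw [hH, ← fromEdgeSet_edgeSet G35]
    exact fromEdgeSet_mono hsub
  have hedge : H.edgeSet = ↑(S i) := by
    rw [hH, edgeSet_fromEdgeSet]
    ext e
    simp only [Set.mem_diff, Set.mem_setOf_eq, and_iff_left_iff_imp]
    intro he
    exact not_isDiag_of_mem_edgeSet _ (hsub he)
  have hnot : ¬H.IsAcyclic := by
    intro ha
    have hb := lemA ha
    rw [hedge, Set.ncard_coe_finset] at hb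
    have : Fintype.card V8 = 8 := by decide
    omega
  simp only [IsAcyclic, not_forall, not_not] at hnot
  obtain ⟨v, w, hw⟩ := hnot
  refine ⟨v, w.mapLe hHG, hw.mapLe hHG, i, ?_⟩
  intro e hee
  have hee' : e ∈ w.edges := by
    simpa only [Walk.mapLe, Walk.edges_map, List.mem_map, Hom.ofLE_apply,
      Sym2.map_id', id, exists_eq_right] using hee
  have := w.edges_subset_edgeSet hee'
  rw [hedge] at this
  exact (Finset.mem_filter.mp this).2

def base : Fin 3 → Fin 5 → Fin 2
| 1, 0 => 0 | 1, 1 => 0 | 1, 2 => 0 | 0, 2 => 0 | 0, 3 => 0 | 2, 3 => 0 | 2, 4 => 0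
| _, _ => 1

def adjF (a : Fin 3) (b : Fin 5) (i : Fin 2) : V8 → V8 → Bool
| .inl p, .inr q => !(decide (Equiv.swap 0 a p = 0 ∧ Equiv.swap 0 b q = 0))
    && (base (Equiv.swap 0 a p) (Equiv.swap 0 b q) == i)
| .inr q, .inl p => !(decide (Equiv.swap 0 a p = 0 ∧ Equiv.swap 0 b q = 0))
    && (base (Equiv.swap 0 a p) (Equiv.swap 0 b q) == i)
| _, _ => false

def Hd (a : Fin 3) (b : Fin 5) (i : Fin 2) : SimpleGraph V8 where
  Adj x y := adjF a b i x y = true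
  symm := ⟨by rintro (p|p) (q|q) h <;> exact h⟩
  loopless := ⟨by rintro (p|p) h <;> simp [adjF] at h⟩

instance (a : Fin 3) (b : Fin 5) (i : Fin 2) : DecidableRel (Hd a b i).Adj := fun x y =>
  inferInstanceAs (Decidable (adjF a b i x y = true))

instance (G : SimpleGraph V8) [DecidableRel G.Adj] (e : Sym2 V8) :
    DecidableRel (G \ fromEdgeSet {e}).Adj := fun x y =>
  decidable_of_iff (G.Adj x y ∧ ¬(s(x, y) = e ∧ x ≠ y)) (by simp [fromEdgeSet_adj])

set_option maxRecDepth 1000000 in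
lemma Hd00_bridge : ∀ i : Fin 2, ∀ v w : V8, (Hd 0 0 i).Adj v w →
    ¬((Hd 0 0 i) \ fromEdgeSet {s(v, w)}).Reachable v w := by decide

lemma Hd00_acyclic (i : Fin 2) : (Hd 0 0 i).IsAcyclic := by
  rw [isAcyclic_iff_forall_adj_isBridge]
  intro v w hadj
  rw [isBridge_iff]
  exact Hd00_bridge i v w hadj

lemma Hd_acyclic (a : Fin 3) (b : Fin 5) (i : Fin 2) : (Hd a b i).IsAcyclic := by
  intro v w hc
  let φ : V8 ≃ V8 := Equiv.sumCongr (Equiv.swap 0 a) (Equiv.swap 0 b)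
  have hiso : ∀ x y : V8, (Hd 0 0 i).Adj (φ x) (φ y) ↔ (Hd a b i).Adj x y := by
    rintro (p|p) (q|q) <;>
      simp [φ, Hd, adjF, Equiv.swap_self]
  let f : Hd a b i →g Hd 0 0 i := ⟨φ, fun h => (hiso _ _).mpr h⟩
  exact Hd00_acyclic i (w.map f) (hc.map (fun x y h => φ.injective h))

def colf (a : Fin 3) (b : Fin 5) : V8 → V8 → Fin 2
| .inl p, .inr q => base (Equiv.swap 0 a p) (Equiv.swap 0 b q)
| .inr q, .inl p => base (Equiv.swap 0 a p) (Equiv.swap 0 b q)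
| _, _ => 0

def coloring (a : Fin 3) (b : Fin 5) : Sym2 V8 → Fin 2 :=
  Sym2.lift ⟨colf a b, by rintro (p|p) (q|q) <;> rfl⟩

lemma key (a : Fin 3) (b : Fin 5) :
    ¬ IsRamseyCyc 2 (G35.deleteEdges {s(Sum.inl a, Sum.inr b)}) := by
  intro hR
  obtain ⟨v, w, hc, i, hmono⟩ := hR (coloring a b)
  have hsub : ∀ e' ∈ w.edges, e' ∈ (Hd a b i).edgeSet := by
    intro e' he'
    have h1 := w.edges_subset_edgeSet he'
    rw [edgeSet_deleteEdges] at h1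
    have h2 := hmono e' he'
    revert h1 h2
    refine Sym2.ind (fun x y => ?_) e'
    intro h1 h2
    obtain ⟨hG, hne⟩ := h1
    rw [mem_edgeSet] at hG ⊢
    rw [Set.mem_singleton_iff] at hne
    rcases x with p | p <;> rcases y with q | q
    · simp at hG
    · -- inl p, inr q
      rw [coloring, Sym2.lift_mk] at h2
      show adjF a b i (Sum.inl p) (Sum.inr q) = true
      simp only [adjF, Bool.and_eq_true, Bool.not_eq_true', decide_eq_false_iff_not,
        beq_iff_eq]
      refine ⟨?_, h2⟩
      rintro ⟨hp, hq⟩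
      apply hne
      have hp' : p = a := (Equiv.swap 0 a).injective (by simp [hp])
      have hq' : q = b := (Equiv.swap 0 b).injective (by simp [hq])
      rw [hp', hq']
    · -- inr p, inl q
      rw [coloring, Sym2.lift_mk] at h2
      show adjF a b i (Sum.inr p) (Sum.inl q) = true
      simp only [adjF, Bool.and_eq_true, Bool.not_eq_true', decide_eq_false_iff_not,
        beq_iff_eq]
      refine ⟨?_, h2⟩
      rintro ⟨hq, hp⟩
      apply hne
      have hq' : q = a := (Equiv.swap 0 a).injective (by simp [hq])
      have hp' : p = b := (Equiv.swap 0 b).injective (by simp [hp])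
      rw [hp', hq', Sym2.eq_swap]
    · simp at hG
  exact Hd_acyclic a b i (w.transfer _ hsub) (hc.transfer hsub)

lemma part2 : ∀ e ∈ G35.edgeSet, ¬ IsRamseyCyc 2 (G35.deleteEdges {e}) := by
  intro e
  refine Sym2.ind (fun x y => ?_) e
  intro he
  rw [mem_edgeSet] at he
  rcases x with p | p <;> rcases y with q | q
  · simp at he
  · exact key p q
  · rw [Sym2.eq_swap]; exact key q p
  · simp at he

/-- `K_{3,5}` is 2-Ramsey for cyclicity, and minimally so: deleting any
edge destroys the property. -/
theorem stmt14 :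
    IsRamseyCyc 2 (completeBipartiteGraph (Fin 3) (Fin 5)) ∧
    ∀ e ∈ (completeBipartiteGraph (Fin 3) (Fin 5)).edgeSet,
      ¬ IsRamseyCyc 2 ((completeBipartiteGraph (Fin 3) (Fin 5)).deleteEdges {e}) :=
  ⟨part1, part2⟩
end
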